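/- arXiv:1306.3587 — 6 statements merged into one kernel-verified Lean document; each statement's English description precedes it below -/
import Mathlib

section
/- For every bounded function f : ℕ^Λ → ℝ, the series ∑_{η∈ℕ^Λ} ν_φ^Λ(η)·(Lf)(η) converges absolutely and equals 0; that is, every product measure ν_φ^Λ built from a function λ harmonic for p is a stationary measure for the zero-range process. -/
open Filter Topology

/-- Stationary weights of the zero-range process: `w x 0 = 1`,
`w x n = ∏_{k=1}^n 1 / u x k`. -/
noncomputable def zrpWeight (u : ℕ → ℝ) (n : ℕ) : ℝ :=
  ∏ k ∈ Finset.Icc 1 n, (u k)⁻¹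

/-- The configuration `η^{xy}` obtained from `η` by moving one particle from `x` to `y`. -/
def moveConf {Λ : Type*} [DecidableEq Λ] (η : Λ → ℕ) (x y : Λ) : Λ → ℕ :=
  fun z => η z - (if z = x then 1 else 0) + (if z = y then 1 else 0)

/-!
Write `ν(η) = ∏ₓ gₓ(ηₓ)`, where the marginals satisfy `gₓ(n+1) uₓ(n+1) = λₓ φ gₓ(n)`.
As `uₓ(0) = 0`, only configurations with a particle at `x` carry the rate `uₓ`, and the
substitution `η = ζ + δₓ` gives `∑_η ν(η) uₓ(ηₓ) B(η) = λₓ φ ∑_ζ ν(ζ) B(ζ + δₓ)`; moreover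
`(ζ + δₓ)^{xy} = ζ + δ_y`. Hence `∑_η ν(η) (Lf)(η) = ∑_{x,y} p(x,y) λₓ φ (F_y - Fₓ)` with
`F_y = ∑_ζ ν(ζ) f(ζ + δ_y)`, which vanishes because `λ` is harmonic. Everything converges
absolutely since `ν` is a product of absolutely summable marginals and `f` is bounded.
-/

universe u

theorem summable_pi_prod_of_nonneg {β : Type*} :
    ∀ (ι : Type u) [Fintype ι] (f : ι → β → ℝ), (∀ i b, 0 ≤ f i b) → (∀ i, Summable (f i)) →
    Summable fun η : ι → β => ∏ i, f i (η i) := by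
  refine Fintype.induction_empty_option ?_ ?_ ?_
  · intro α γ _ e ih f hf₀ hf
    let _ : Fintype α := .ofEquiv γ e.symm
    refine ((Equiv.piCongrLeft' (fun _ => β) e).summable_iff
      (f := fun η : γ → β => ∏ i, f i (η i))).mp ?_
    refine (ih (fun a => f (e a)) (fun a => hf₀ (e a)) (fun a => hf (e a))).congr fun η => ?_
    exact Fintype.prod_equiv e _ _ fun a => by simp
  · intro f _ _
    exact Summable.of_finite
  · intro α _ ih f hf₀ hf
    have h := (hf none).mul_of_nonneg (ih _ (fun a => hf₀ (some a)) fun a => hf (some a))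
      (hf₀ none) fun η => Finset.prod_nonneg fun a _ => hf₀ (some a) (η a)
    refine (Equiv.piOptionEquivProd.symm.summable_iff).mp ?_
    exact h.congr fun η => by simp [Fintype.prod_option, Equiv.piOptionEquivProd]

section Configurations

variable {Λ : Type*} [DecidableEq Λ]

def addParticle (x : Λ) (η : Λ → ℕ) : Λ → ℕ := Function.update η x (η x + 1)

theorem addParticle_injective (x : Λ) : Function.Injective (addParticle x) := by
  intro η ζ h
  funext z
  have hz := congrFun h z
  rcases eq_or_ne z x with rfl | hzx
  · simp only [addParticle, Function.update_self] at hz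
    omega
  · simpa [addParticle, Function.update_of_ne hzx] using hz

theorem mem_range_addParticle {x : Λ} {η : Λ → ℕ} (h : η x ≠ 0) :
    η ∈ Set.range (addParticle x) := by
  refine ⟨Function.update η x (η x - 1), ?_⟩
  funext z
  rcases eq_or_ne z x with rfl | hzx
  · simp only [addParticle, Function.update_self]
    omega
  · simp [addParticle, Function.update_of_ne hzx]

theorem moveConf_addParticle (x y : Λ) (ζ : Λ → ℕ) :
    moveConf (addParticle x ζ) x y = addParticle y ζ := by
  funext z
  by_cases hzx : z = x <;> by_cases hzy : z = y <;>
    simp_all [moveConf, addParticle, Function.update_of_ne]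

theorem hasSum_comp_addParticle_iff {α : Type*} [AddCommMonoid α] [TopologicalSpace α]
    {F : (Λ → ℕ) → α} {a : α} (x : Λ) (hF : ∀ η, η x = 0 → F η = 0) :
    HasSum (fun ζ => F (addParticle x ζ)) a ↔ HasSum F a :=
  (addParticle_injective x).hasSum_iff fun η hη =>
    hF η (not_not.1 fun h => hη (mem_range_addParticle h))

end Configurations

section ProductWeight

variable {Λ : Type*} [Fintype Λ] {g : Λ → ℕ → ℝ}

def productWeight (g : Λ → ℕ → ℝ) (η : Λ → ℕ) : ℝ := ∏ x, g x (η x)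

theorem summable_abs_productWeight (hg : ∀ x, Summable (g x)) :
    Summable fun η => |productWeight g η| := by
  simp only [productWeight, Finset.abs_prod]
  exact summable_pi_prod_of_nonneg Λ (fun x n => |g x n|) (fun _ _ => abs_nonneg _)
    fun x => (hg x).abs

theorem summable_productWeight_mul {B : (Λ → ℕ) → ℝ} {M : ℝ} (hg : ∀ x, Summable (g x))
    (hB : ∀ η, |B η| ≤ M) : Summable fun η => productWeight g η * B η :=
  Summable.of_norm_bounded ((summable_abs_productWeight hg).mul_right M) fun η => by
    rw [Real.norm_eq_abs, abs_mul]
    exact mul_le_mul_of_nonneg_left (hB η) (abs_nonneg _)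

variable [DecidableEq Λ] {r : ℕ → ℝ} {c : ℝ} {x : Λ}

noncomputable def meanAddParticle (g : Λ → ℕ → ℝ) (f : (Λ → ℕ) → ℝ) (y : Λ) : ℝ :=
  ∑' ζ, productWeight g ζ * f (addParticle y ζ)

theorem productWeight_addParticle_mul (hstep : ∀ n, g x (n + 1) * r (n + 1) = c * g x n)
    (ζ : Λ → ℕ) : productWeight g (addParticle x ζ) * r (ζ x + 1) = c * productWeight g ζ := by
  have hrest : ∏ y ∈ {x}ᶜ, g y (addParticle x ζ y) = ∏ y ∈ {x}ᶜ, g y (ζ y) :=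
    Finset.prod_congr rfl fun y hy => by
      rw [addParticle, Function.update_of_ne (Finset.mem_compl.1 hy ∘ Finset.mem_singleton.2)]
  rw [productWeight, productWeight, Fintype.prod_eq_mul_prod_compl x,
    Fintype.prod_eq_mul_prod_compl x, hrest, addParticle, Function.update_self]
  linear_combination (∏ y ∈ {x}ᶜ, g y (ζ y)) * hstep (ζ x)

theorem hasSum_productWeight_mul_rate {B : (Λ → ℕ) → ℝ} {M : ℝ} (hg : ∀ x, Summable (g x))
    (hr : r 0 = 0) (hstep : ∀ n, g x (n + 1) * r (n + 1) = c * g x n) (hB : ∀ η, |B η| ≤ M) :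
    HasSum (fun η => productWeight g η * r (η x) * B η) (c * meanAddParticle g B x) := by
  refine (hasSum_comp_addParticle_iff x fun η hη => by simp [hη, hr]).1 ?_
  have hterm : ∀ ζ, productWeight g (addParticle x ζ) * r (addParticle x ζ x) *
      B (addParticle x ζ) = c * (productWeight g ζ * B (addParticle x ζ)) := fun ζ => by
    rw [← mul_assoc, ← productWeight_addParticle_mul hstep, addParticle, Function.update_self]
  simp only [hterm]
  exact (summable_productWeight_mul hg fun ζ => hB (addParticle x ζ)).hasSum.mul_left c

end ProductWeight

theorem sum_sum_mul_sub_eq_zero_of_balance {Λ : Type*} [Fintype Λ] {p : Λ → Λ → ℝ}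
    {a : Λ → ℝ} (hbal : ∀ y, ∑ x, (a x * p x y - a y * p y x) = 0) (F : Λ → ℝ) :
    ∑ x, ∑ y, p x y * a x * (F y - F x) = 0 := by
  calc ∑ x, ∑ y, p x y * a x * (F y - F x)
      = ∑ x, ∑ y, a x * p x y * F y - ∑ x, ∑ y, a x * p x y * F x := by
        rw [← Finset.sum_sub_distrib]
        refine Finset.sum_congr rfl fun x _ => ?_
        rw [← Finset.sum_sub_distrib]
        exact Finset.sum_congr rfl fun y _ => by ring
    _ = ∑ y, F y * ∑ x, (a x * p x y - a y * p y x) := by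
        rw [Finset.sum_comm]
        simp only [Finset.mul_sum, ← Finset.sum_sub_distrib]
        refine Finset.sum_congr rfl fun y _ => Finset.sum_congr rfl fun x _ => ?_
        ring
    _ = 0 := by simp [hbal]

theorem hasSum_productWeight_mul_generator {Λ : Type*} [Fintype Λ] [DecidableEq Λ]
    {g : Λ → ℕ → ℝ} {p : Λ → Λ → ℝ} {u : Λ → ℕ → ℝ} {c : Λ → ℝ} {f : (Λ → ℕ) → ℝ} {M : ℝ}
    (hg : ∀ x, Summable (g x)) (hu : ∀ x, u x 0 = 0)
    (hstep : ∀ x n, g x (n + 1) * u x (n + 1) = c x * g x n) (hf : ∀ η, |f η| ≤ M) :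
    HasSum (fun η => productWeight g η * ∑ x, ∑ y, p x y * u x (η x) * (f (moveConf η x y) - f η))
      (∑ x, ∑ y, p x y * c x * (meanAddParticle g f y - meanAddParticle g f x)) := by
  have hpair : ∀ x y, HasSum
      (fun η => productWeight g η * (p x y * u x (η x) * (f (moveConf η x y) - f η)))
      (p x y * c x * (meanAddParticle g f y - meanAddParticle g f x)) := by
    intro x y
    have hmove := hasSum_productWeight_mul_rate hg (hu x) (hstep x)
      (B := fun η => f (moveConf η x y)) fun η => hf _
    have hstay := hasSum_productWeight_mul_rate hg (hu x) (hstep x) hf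
    simp only [meanAddParticle, moveConf_addParticle] at hmove
    have hterm : (fun η => productWeight g η * (p x y * u x (η x) * (f (moveConf η x y) - f η)))
        = fun η => p x y * (productWeight g η * u x (η x) * f (moveConf η x y) -
          productWeight g η * u x (η x) * f η) := funext fun η => by ring
    rw [hterm, mul_assoc, mul_sub]
    exact (hmove.sub hstay).mul_left (p x y)
  convert hasSum_sum fun x _ => hasSum_sum fun y _ => hpair x y using 1
  funext η
  simp only [Finset.mul_sum]

theorem zrpWeight_succ (u : ℕ → ℝ) (n : ℕ) :
    zrpWeight u (n + 1) = zrpWeight u n * (u (n + 1))⁻¹ :=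
  Finset.prod_Icc_succ_top (Nat.le_add_left 1 n) _

noncomputable def zrpMarginal (u : ℕ → ℝ) (c : ℝ) (n : ℕ) : ℝ :=
  zrpWeight u n * c ^ n / ∑' k, zrpWeight u k * c ^ k

theorem zrpMarginal_succ_mul {u : ℕ → ℝ} {n : ℕ} (hu : u (n + 1) ≠ 0) (c : ℝ) :
    zrpMarginal u c (n + 1) * u (n + 1) = c * zrpMarginal u c n := by
  simp only [zrpMarginal, zrpWeight_succ, pow_succ]
  field_simp

theorem zrp_product_measure_stationary_general
    {Λ : Type*} [Fintype Λ] [DecidableEq Λ]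
    (p : Λ → Λ → ℝ)
    (lam : Λ → ℝ)
    (hharm : ∀ y : Λ, ∑ x, (lam x * p x y - lam y * p y x) = 0)
    (u : Λ → ℕ → ℝ)
    (huzero : ∀ x n, u x n = 0 ↔ n = 0)
    (φ : ℝ)
    (hz : ∀ x : Λ, Summable (fun n => zrpWeight (u x) n * (lam x * φ) ^ n))
    (ν : (Λ → ℕ) → ℝ)
    (hν : ∀ η, ν η = ∏ x, zrpWeight (u x) (η x) * (lam x * φ) ^ (η x) /
        (∑' n, zrpWeight (u x) n * (lam x * φ) ^ n))
    (f : (Λ → ℕ) → ℝ) (hf : ∃ M, ∀ η, |f η| ≤ M) :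
    Summable (fun η : Λ → ℕ =>
      |ν η * ∑ x, ∑ y, p x y * u x (η x) * (f (moveConf η x y) - f η)|) ∧
    ∑' η : Λ → ℕ, ν η * ∑ x, ∑ y, p x y * u x (η x) * (f (moveConf η x y) - f η) = 0 := by
  obtain ⟨M, hM⟩ := hf
  have hν_eq : ν = productWeight fun x => zrpMarginal (u x) (lam x * φ) := funext hν
  have hbal : ∀ y, ∑ x, (lam x * φ * p x y - lam y * φ * p y x) = 0 := fun y => by
    rw [← mul_zero φ, ← hharm y, Finset.mul_sum]
    exact Finset.sum_congr rfl fun x _ => by ring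
  have hsum := hasSum_productWeight_mul_generator (p := p)
    (g := fun x => zrpMarginal (u x) (lam x * φ)) (fun x => (hz x).div_const _)
    (fun x => (huzero x 0).2 rfl)
    (fun x n => zrpMarginal_succ_mul ((huzero x (n + 1)).not.2 n.succ_ne_zero) _) hM
  rw [← hν_eq, sum_sum_mul_sub_eq_zero_of_balance hbal] at hsum
  exact ⟨summable_abs_iff.2 hsum.summable, hsum.tsum_eq⟩

/-- For every bounded `f : ℕ^Λ → ℝ`, the series `∑_η ν_φ^Λ(η)·(Lf)(η)` converges
absolutely and equals `0`: product measures built from a function `lam` harmonic for `p`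
are stationary for the zero-range process. -/
theorem zrp_product_measure_stationary
    {Λ : Type*} [Fintype Λ] [DecidableEq Λ] [Nonempty Λ]
    (p : Λ → Λ → ℝ) (hp : ∀ x y, 0 ≤ p x y) (hpdiag : ∀ x, p x x = 0)
    (lam : Λ → ℝ) (hlam : ∀ x, 0 < lam x)
    (hharm : ∀ y : Λ, ∑ x, (lam x * p x y - lam y * p y x) = 0)
    (u : Λ → ℕ → ℝ) (hupos : ∀ x n, 0 ≤ u x n)
    (huzero : ∀ x n, u x n = 0 ↔ n = 0)
    (φ : ℝ) (hφ : 0 < φ)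
    (hz : ∀ x : Λ, Summable (fun n => zrpWeight (u x) n * (lam x * φ) ^ n))
    (ν : (Λ → ℕ) → ℝ)
    (hν : ∀ η, ν η = ∏ x, zrpWeight (u x) (η x) * (lam x * φ) ^ (η x) /
        (∑' n, zrpWeight (u x) n * (lam x * φ) ^ n))
    (f : (Λ → ℕ) → ℝ) (hf : ∃ M, ∀ η, |f η| ≤ M) :
    Summable (fun η : Λ → ℕ =>
      |ν η * ∑ x, ∑ y, p x y * u x (η x) * (f (moveConf η x y) - f η)|) ∧
    ∑' η : Λ → ℕ, ν η * ∑ x, ∑ y, p x y * u x (η x) * (f (moveConf η x y) - f η) = 0 :=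
  zrp_product_measure_stationary_general p lam hharm u huzero φ hz ν hν f hf
end

section
/- For all bounded functions f,g : ℕ^Λ → ℝ, all the relevant series converge absolutely and ν_φ^Λ(f·Lg) = ν_φ^Λ(g·Lf); in particular (taking g≡1) ν_φ^Λ(Lf) = 0, so ν_φ^Λ is a reversible stationary measure for the process. -/
open Filter Topology

/-- Stationary weights: `w 0 = 1`, `w n = ∏_{k=1}^n v(k−1)/u(k)`. -/
noncomputable def mpWeight (u v : ℕ → ℝ) (n : ℕ) : ℝ :=
  ∏ k ∈ Finset.Icc 1 n, v (k - 1) / u k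

/-- The generator `(Lf)(η) = ∑_{x,y} p(x,y)·u_x(η_x)·v_y(η_y)·(f(η^{xy}) − f(η))`. -/
noncomputable def genApply {Λ : Type*} [Fintype Λ] [DecidableEq Λ]
    (p : Λ → Λ → ℝ) (u v : Λ → ℕ → ℝ) (f : (Λ → ℕ) → ℝ) (η : Λ → ℕ) : ℝ :=
  ∑ x, ∑ y, p x y * u x (η x) * v y (η y) * (f (moveConf η x y) - f η)

/-!
Write `ν = ∏ₓ Fₓ(ηₓ)`. The one-site recursion `Fₓ(n+1) uₓ(n+1) = λₓφ Fₓ(n) vₓ(n)` together with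
`λₓ p(x,y) = λ_y p(y,x)` gives detailed balance on configurations,
`ν(ξ+δₓ) c_{xy}(ξ+δₓ) = ν(ξ+δ_y) c_{yx}(ξ+δ_y)` for the jump rates `c`. Substituting `η = ξ + δₓ`
(the terms with `ηₓ = 0` vanish because `uₓ(0) = 0`) therefore turns the series over jumps
`x → y` into the series over the reverse jumps `y → x`. Averaging the two expressions of
`ν(f·Lg)` so obtained yields the Dirichlet form `ν(f·Lg) = -½ ∑ ν c (∇f)(∇g)`, which is
symmetric in `f` and `g` and vanishes for constant `f`. All series are dominated by the product
of the summable one-site series `|Fₓ|(1 + |uₓ| + |vₓ|)`.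
-/

open Finset

def jumpRate {Λ : Type*} (p : Λ → Λ → ℝ) (u v : Λ → ℕ → ℝ) (η : Λ → ℕ) (x y : Λ) : ℝ :=
  p x y * u x (η x) * v y (η y)

lemma jumpRate_eq_zero {Λ : Type*} {p : Λ → Λ → ℝ} {u v : Λ → ℕ → ℝ}
    (hu0 : ∀ x, u x 0 = 0) {η : Λ → ℕ} {x : Λ} (hη : η x = 0) (y : Λ) :
    jumpRate p u v η x y = 0 := by
  simp [jumpRate, hη, hu0]

section Configurations

variable {Λ : Type*} [DecidableEq Λ]

lemma moveConf_add_single (ξ : Λ → ℕ) (x y : Λ) :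
    moveConf (ξ + Pi.single x 1) x y = ξ + Pi.single y 1 := by
  funext z
  simp only [moveConf, Pi.add_apply, Pi.single_apply]
  split_ifs <;> omega

lemma tsum_comp_add_single {h : (Λ → ℕ) → ℝ} {x : Λ} (hh : ∀ η, η x = 0 → h η = 0) :
    ∑' ξ : Λ → ℕ, h (ξ + Pi.single x 1) = ∑' η, h η := by
  refine Function.Injective.tsum_eq (add_left_injective _) fun η hη => ⟨η - Pi.single x 1, ?_⟩
  have hηx : η x ≠ 0 := fun h0 => hη (hh η h0)
  funext z
  simp only [Pi.add_apply, Pi.sub_apply, Pi.single_apply]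
  split_ifs with hz
  · subst hz; omega
  · omega

end Configurations

lemma abs_mul_sub_le {α : Type*} {f g : α → ℝ} {Mf Mg : ℝ} (hf : ∀ a, |f a| ≤ Mf)
    (hg : ∀ a, |g a| ≤ Mg) (a b c : α) : |f a * (g b - g c)| ≤ Mf * (Mg + Mg) := by
  rw [abs_mul]
  exact mul_le_mul (hf a) ((abs_sub _ _).trans (add_le_add (hg b) (hg c))) (abs_nonneg _)
    ((abs_nonneg _).trans (hf a))

lemma summable_mul_of_succ_mul_eq {F u v : ℕ → ℝ} {a : ℝ}
    (hF : ∀ n, F (n + 1) * u (n + 1) = a * F n * v n) (hFv : Summable fun n => F n * v n) :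
    Summable fun n => F n * u n :=
  (summable_nat_add_iff 1).mp <| (hFv.mul_left a).congr fun n => by rw [hF]; ring

section ProductMeasure

variable {Λ : Type*} [Fintype Λ] [DecidableEq Λ]

def prodDensity (F : Λ → ℕ → ℝ) (η : Λ → ℕ) : ℝ :=
  ∏ z, F z (η z)

noncomputable def edgeFlux (p : Λ → Λ → ℝ) (u v F : Λ → ℕ → ℝ)
    (h : (Λ → ℕ) → (Λ → ℕ) → ℝ) : ℝ :=
  ∑ x, ∑ y, ∑' η, prodDensity F η * (jumpRate p u v η x y * h η (moveConf η x y))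

variable {p : Λ → Λ → ℝ} {u v F : Λ → ℕ → ℝ} {a : Λ → ℝ}

lemma genApply_eq_sum_jumpRate (f : (Λ → ℕ) → ℝ) (η : Λ → ℕ) :
    genApply p u v f η = ∑ x, ∑ y, jumpRate p u v η x y * (f (moveConf η x y) - f η) :=
  rfl

lemma prodDensity_add_single_mul {x : Λ} (hF : ∀ n, F x (n + 1) * u x (n + 1) = a x * F x n * v x n)
    (ξ : Λ → ℕ) :
    prodDensity F (ξ + Pi.single x 1) * u x (ξ x + 1) = a x * v x (ξ x) * prodDensity F ξ := by
  have hrest : ∏ z ∈ {x}ᶜ, F z ((ξ + Pi.single x 1 : Λ → ℕ) z) = ∏ z ∈ {x}ᶜ, F z (ξ z) :=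
    prod_congr rfl fun z hz => by
      rw [Pi.add_apply, Pi.single_eq_of_ne (by simpa using hz), add_zero]
  rw [prodDensity, prodDensity, Fintype.prod_eq_mul_prod_compl x, Fintype.prod_eq_mul_prod_compl x,
    hrest, Pi.add_apply, Pi.single_eq_same]
  linear_combination (∏ z ∈ {x}ᶜ, F z (ξ z)) * hF (ξ x)

lemma prodDensity_mul_jumpRate_add_single
    (hF : ∀ x n, F x (n + 1) * u x (n + 1) = a x * F x n * v x n)
    (hdb : ∀ x y, a x * p x y = a y * p y x) (ξ : Λ → ℕ) (x y : Λ) :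
    prodDensity F (ξ + Pi.single x 1) * jumpRate p u v (ξ + Pi.single x 1) x y =
      prodDensity F (ξ + Pi.single y 1) * jumpRate p u v (ξ + Pi.single y 1) y x := by
  rcases eq_or_ne x y with rfl | hxy
  · rfl
  have hx := prodDensity_add_single_mul (hF x) ξ
  have hy := prodDensity_add_single_mul (hF y) ξ
  simp only [jumpRate, Pi.add_apply, Pi.single_eq_same, Pi.single_eq_of_ne hxy,
    Pi.single_eq_of_ne hxy.symm, add_zero]
  linear_combination (p x y * v y (ξ y)) * hx - (p y x * v x (ξ x)) * hy +
    (v x (ξ x) * v y (ξ y) * prodDensity F ξ) * hdb x y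

lemma tsum_prodDensity_mul_jumpRate_swap (hu0 : ∀ x, u x 0 = 0)
    (hF : ∀ x n, F x (n + 1) * u x (n + 1) = a x * F x n * v x n)
    (hdb : ∀ x y, a x * p x y = a y * p y x) (h : (Λ → ℕ) → (Λ → ℕ) → ℝ) (x y : Λ) :
    ∑' η, prodDensity F η * (jumpRate p u v η x y * h η (moveConf η x y)) =
      ∑' η, prodDensity F η * (jumpRate p u v η y x * h (moveConf η y x) η) := by
  have hx := tsum_comp_add_single
    (x := x) (h := fun η => prodDensity F η * (jumpRate p u v η x y * h η (moveConf η x y)))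
    fun η hη => by simp [jumpRate_eq_zero hu0 hη]
  have hy := tsum_comp_add_single
    (x := y) (h := fun η => prodDensity F η * (jumpRate p u v η y x * h (moveConf η y x) η))
    fun η hη => by simp [jumpRate_eq_zero hu0 hη]
  rw [← hx, ← hy]
  refine tsum_congr fun ξ => ?_
  simp only [moveConf_add_single, ← mul_assoc, prodDensity_mul_jumpRate_add_single hF hdb]

lemma edgeFlux_swap (hu0 : ∀ x, u x 0 = 0)
    (hF : ∀ x n, F x (n + 1) * u x (n + 1) = a x * F x n * v x n)
    (hdb : ∀ x y, a x * p x y = a y * p y x) (h : (Λ → ℕ) → (Λ → ℕ) → ℝ) :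
    edgeFlux p u v F (fun η η' => h η' η) = edgeFlux p u v F h := by
  rw [edgeFlux, edgeFlux, sum_comm]
  exact sum_congr rfl fun x _ => sum_congr rfl fun y _ =>
    (tsum_prodDensity_mul_jumpRate_swap hu0 hF hdb h x y).symm

lemma summable_prodDensity {G : Λ → ℕ → ℝ} (hG0 : ∀ z n, 0 ≤ G z n) (hG : ∀ z, Summable (G z)) :
    Summable (prodDensity G) := by
  refine summable_of_sum_le (c := ∏ z, ∑' n, G z n)
    (fun η => prod_nonneg fun z _ => hG0 z (η z)) fun s => ?_
  set N := s.sup (fun η => univ.sup η) + 1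
  have hsub : s ⊆ Fintype.piFinset fun _ => range N := fun η hη => by
    simp only [Fintype.mem_piFinset, mem_range]
    intro z
    have := (le_sup (mem_univ z)).trans (le_sup (f := fun η : Λ → ℕ => univ.sup η) hη)
    omega
  calc ∑ η ∈ s, prodDensity G η
      ≤ ∑ η ∈ Fintype.piFinset fun _ => range N, ∏ z, G z (η z) :=
        sum_le_sum_of_subset_of_nonneg hsub fun η _ _ => prod_nonneg fun z _ => hG0 z (η z)
    _ = ∏ z, ∑ n ∈ range N, G z n := (prod_univ_sum _ _).symm
    _ ≤ ∏ z, ∑' n, G z n :=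
        prod_le_prod (fun z _ => sum_nonneg fun n _ => hG0 z n)
          fun z _ => (hG z).sum_le_tsum _ fun n _ => hG0 z n

lemma mul_le_prod_of_one_le {c : Λ → ℝ} (hc : ∀ z, 1 ≤ c z) {x y : Λ} (hxy : x ≠ y) :
    c x * c y ≤ ∏ z, c z := by
  rw [← prod_pair hxy]
  exact prod_le_prod_of_subset_of_one_le (subset_univ _)
    (fun z _ => zero_le_one.trans (hc z)) fun z _ _ => hc z

lemma abs_prodDensity_mul_jumpRate_le (hpdiag : ∀ x, p x x = 0) (η : Λ → ℕ) (x y : Λ) :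
    |prodDensity F η * jumpRate p u v η x y| ≤
      |p x y| * prodDensity (fun z n => |F z n| * (1 + |u z n| + |v z n|)) η := by
  rcases eq_or_ne x y with rfl | hxy
  · simp [jumpRate, hpdiag]
  have huv : |u x (η x)| * |v y (η y)| ≤ ∏ z, (1 + |u z (η z)| + |v z (η z)|) :=
    (mul_le_mul (by linarith [abs_nonneg (v x (η x))]) (by linarith [abs_nonneg (u y (η y))])
      (abs_nonneg _) (by positivity)).trans
      (mul_le_prod_of_one_le (c := fun z => 1 + |u z (η z)| + |v z (η z)|)
        (fun z => by linarith [abs_nonneg (u z (η z)), abs_nonneg (v z (η z))]) hxy)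
  calc |prodDensity F η * jumpRate p u v η x y|
      = |p x y| * ((∏ z, |F z (η z)|) * (|u x (η x)| * |v y (η y)|)) := by
        simp only [prodDensity, jumpRate, abs_mul, abs_prod]; ring
    _ ≤ |p x y| * ((∏ z, |F z (η z)|) * ∏ z, (1 + |u z (η z)| + |v z (η z)|)) := by gcongr
    _ = _ := by rw [prodDensity, prod_mul_distrib]

lemma summable_prodDensity_mul_jumpRate_mul (hpdiag : ∀ x, p x x = 0)
    (hFs : ∀ z, Summable (F z)) (hFu : ∀ z, Summable fun n => F z n * u z n)
    (hFv : ∀ z, Summable fun n => F z n * v z n) {k : (Λ → ℕ) → ℝ} {M : ℝ}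
    (hk : ∀ η, |k η| ≤ M) (x y : Λ) :
    Summable fun η => prodDensity F η * (jumpRate p u v η x y * k η) := by
  have hG : Summable (prodDensity fun z n => |F z n| * (1 + |u z n| + |v z n|)) :=
    summable_prodDensity (fun z n => by positivity) fun z =>
      (((hFs z).abs.add (hFu z).abs).add (hFv z).abs).congr fun n => by
        simp only [abs_mul]; ring
  refine Summable.of_norm_bounded (hG.mul_left (|p x y| * M)) fun η => ?_
  rw [Real.norm_eq_abs, ← mul_assoc, abs_mul]
  calc |prodDensity F η * jumpRate p u v η x y| * |k η|
      ≤ (|p x y| * prodDensity (fun z n => |F z n| * (1 + |u z n| + |v z n|)) η) * M :=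
        mul_le_mul (abs_prodDensity_mul_jumpRate_le hpdiag η x y) (hk η) (abs_nonneg _)
          (mul_nonneg (abs_nonneg _) (prod_nonneg fun z _ => by positivity))
    _ = _ := by ring

lemma edgeFlux_add {h₁ h₂ : (Λ → ℕ) → (Λ → ℕ) → ℝ}
    (hs₁ : ∀ x y, Summable fun η =>
      prodDensity F η * (jumpRate p u v η x y * h₁ η (moveConf η x y)))
    (hs₂ : ∀ x y, Summable fun η =>
      prodDensity F η * (jumpRate p u v η x y * h₂ η (moveConf η x y))) :
    edgeFlux p u v F (fun η η' => h₁ η η' + h₂ η η') =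
      edgeFlux p u v F h₁ + edgeFlux p u v F h₂ := by
  simp only [edgeFlux, ← sum_add_distrib]
  refine sum_congr rfl fun x _ => sum_congr rfl fun y _ => ?_
  rw [← (hs₁ x y).tsum_add (hs₂ x y)]
  exact tsum_congr fun η => by ring

lemma tsum_prodDensity_mul_genApply (hpdiag : ∀ x, p x x = 0)
    (hFs : ∀ z, Summable (F z)) (hFu : ∀ z, Summable fun n => F z n * u z n)
    (hFv : ∀ z, Summable fun n => F z n * v z n) {f g : (Λ → ℕ) → ℝ} {Mf Mg : ℝ}
    (hf : ∀ η, |f η| ≤ Mf) (hg : ∀ η, |g η| ≤ Mg) :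
    (Summable fun η => prodDensity F η * (f η * genApply p u v g η)) ∧
      ∑' η, prodDensity F η * (f η * genApply p u v g η) =
        edgeFlux p u v F (fun η η' => f η * (g η' - g η)) := by
  have hterm : ∀ x y, Summable fun η =>
      prodDensity F η * (jumpRate p u v η x y * (f η * (g (moveConf η x y) - g η))) :=
    fun x y => summable_prodDensity_mul_jumpRate_mul hpdiag hFs hFu hFv
      (k := fun η => f η * (g (moveConf η x y) - g η)) (fun η => abs_mul_sub_le hf hg _ _ _) x y
  have hexpand : (fun η => prodDensity F η * (f η * genApply p u v g η)) = fun η =>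
      ∑ x, ∑ y, prodDensity F η * (jumpRate p u v η x y * (f η * (g (moveConf η x y) - g η))) := by
    funext η
    simp only [genApply_eq_sum_jumpRate, mul_sum]
    exact sum_congr rfl fun x _ => sum_congr rfl fun y _ => by ring
  rw [hexpand, Summable.tsum_finsetSum fun x _ => summable_sum fun y _ => hterm x y]
  exact ⟨summable_sum fun x _ => summable_sum fun y _ => hterm x y,
    sum_congr rfl fun x _ => Summable.tsum_finsetSum fun y _ => hterm x y⟩

theorem two_mul_tsum_prodDensity_mul_genApply (hu0 : ∀ x, u x 0 = 0)
    (hF : ∀ x n, F x (n + 1) * u x (n + 1) = a x * F x n * v x n)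
    (hdb : ∀ x y, a x * p x y = a y * p y x) (hpdiag : ∀ x, p x x = 0)
    (hFs : ∀ z, Summable (F z)) (hFv : ∀ z, Summable fun n => F z n * v z n)
    {f g : (Λ → ℕ) → ℝ} {Mf Mg : ℝ} (hf : ∀ η, |f η| ≤ Mf) (hg : ∀ η, |g η| ≤ Mg) :
    2 * ∑' η, prodDensity F η * (f η * genApply p u v g η) =
      -edgeFlux p u v F (fun η η' => (f η' - f η) * (g η' - g η)) := by
  have hFu z := summable_mul_of_succ_mul_eq (hF z) (hFv z)
  have hsum : ∀ h : (Λ → ℕ) → (Λ → ℕ) → ℝ, (∀ η η', |h η η'| ≤ Mf * (Mg + Mg)) → ∀ x y,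
      Summable fun η => prodDensity F η * (jumpRate p u v η x y * h η (moveConf η x y)) :=
    fun h hh x y => summable_prodDensity_mul_jumpRate_mul hpdiag hFs hFu hFv
      (k := fun η => h η (moveConf η x y)) (fun η => hh _ _) x y
  calc 2 * ∑' η, prodDensity F η * (f η * genApply p u v g η)
      = edgeFlux p u v F (fun η η' => f η * (g η' - g η)) +
          edgeFlux p u v F (fun η η' => f η' * (g η - g η')) := by
        rw [(tsum_prodDensity_mul_genApply hpdiag hFs hFu hFv hf hg).2,
          edgeFlux_swap hu0 hF hdb (fun η η' => f η * (g η' - g η))]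
        ring
    _ = edgeFlux p u v F (fun η η' => f η * (g η' - g η) + f η' * (g η - g η')) :=
        (edgeFlux_add (hsum _ fun η η' => abs_mul_sub_le hf hg η η' η)
          (hsum _ fun η η' => abs_mul_sub_le hf hg η' η η')).symm
    _ = -edgeFlux p u v F (fun η η' => (f η' - f η) * (g η' - g η)) := by
        simp only [edgeFlux, ← sum_neg_distrib, ← tsum_neg]
        refine sum_congr rfl fun x _ => sum_congr rfl fun y _ => tsum_congr fun η => ?_
        ring

end ProductMeasure

lemma mpWeight_succ_mul (u v : ℕ → ℝ) {n : ℕ} (hu : u (n + 1) ≠ 0) :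
    mpWeight u v (n + 1) * u (n + 1) = mpWeight u v n * v n := by
  rw [mpWeight, prod_Icc_succ_top (by omega), Nat.add_sub_cancel, mul_assoc,
    div_mul_cancel₀ _ hu, mpWeight]

theorem detailed_balance_product_measure_reversible_general
    {Λ : Type*} [Fintype Λ] [DecidableEq Λ]
    (p : Λ → Λ → ℝ) (hpdiag : ∀ x, p x x = 0)
    (lam : Λ → ℝ)
    (hdb : ∀ x y : Λ, lam x * p x y = lam y * p y x)
    (u : Λ → ℕ → ℝ)
    (huzero : ∀ x n, u x n = 0 ↔ n = 0)
    (v : Λ → ℕ → ℝ)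
    (φ : ℝ)
    (hz : ∀ x : Λ, Summable (fun n => mpWeight (u x) (v x) n * (lam x * φ) ^ n))
    (hzv : ∀ x : Λ, Summable (fun n => v x n * mpWeight (u x) (v x) n * (lam x * φ) ^ n))
    (ν : (Λ → ℕ) → ℝ)
    (hν : ∀ η, ν η = ∏ x, mpWeight (u x) (v x) (η x) * (lam x * φ) ^ (η x) /
        (∑' n, mpWeight (u x) (v x) n * (lam x * φ) ^ n))
    (f g : (Λ → ℕ) → ℝ) (hf : ∃ M, ∀ η, |f η| ≤ M) (hg : ∃ M, ∀ η, |g η| ≤ M) :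
    Summable (fun η : Λ → ℕ => |ν η * (f η * genApply p u v g η)|) ∧
    Summable (fun η : Λ → ℕ => |ν η * (g η * genApply p u v f η)|) ∧
    (∑' η : Λ → ℕ, ν η * (f η * genApply p u v g η)) =
      (∑' η : Λ → ℕ, ν η * (g η * genApply p u v f η)) ∧
    (∑' η : Λ → ℕ, ν η * genApply p u v f η) = 0 := by
  obtain ⟨Mf, hMf⟩ := hf
  obtain ⟨Mg, hMg⟩ := hg
  set F : Λ → ℕ → ℝ := fun x n => mpWeight (u x) (v x) n * (lam x * φ) ^ n /
    ∑' m, mpWeight (u x) (v x) m * (lam x * φ) ^ m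
  obtain rfl : ν = prodDensity F := funext hν
  have hu0 x : u x 0 = 0 := (huzero x 0).2 rfl
  have hF x n : F x (n + 1) * u x (n + 1) = lam x * φ * F x n * v x n := by
    have hw := mpWeight_succ_mul (u x) (v x) (mt (huzero x (n + 1)).1 n.succ_ne_zero)
    simp only [F, div_eq_mul_inv]
    linear_combination
      ((lam x * φ) ^ (n + 1) * (∑' m, mpWeight (u x) (v x) m * (lam x * φ) ^ m)⁻¹) * hw
  have hdbφ x y : lam x * φ * p x y = lam y * φ * p y x := by linear_combination φ * hdb x y
  have hFs x : Summable (F x) := (hz x).div_const _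
  have hFv x : Summable fun n => F x n * v x n :=
    ((hzv x).div_const (∑' m, mpWeight (u x) (v x) m * (lam x * φ) ^ m)).congr fun n => by
      simp only [F]; ring
  have hFu x := summable_mul_of_succ_mul_eq (hF x) (hFv x)
  have hfg := two_mul_tsum_prodDensity_mul_genApply hu0 hF hdbφ hpdiag hFs hFv hMf hMg
  have hgf := two_mul_tsum_prodDensity_mul_genApply hu0 hF hdbφ hpdiag hFs hFv hMg hMf
  have h1f := two_mul_tsum_prodDensity_mul_genApply hu0 hF hdbφ hpdiag hFs hFv
    (f := fun _ => 1) (fun _ => le_rfl) hMf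
  refine ⟨(tsum_prodDensity_mul_genApply hpdiag hFs hFu hFv hMf hMg).1.abs,
    (tsum_prodDensity_mul_genApply hpdiag hFs hFu hFv hMg hMf).1.abs, ?_, ?_⟩
  · simp_rw [mul_comm (g _ - g _)] at hgf
    linarith
  · simpa [edgeFlux] using h1f

/-- Under detailed balance `lam x p(x,y) = lam y p(y,x)` all relevant series converge
absolutely, `ν_φ^Λ(f·Lg) = ν_φ^Λ(g·Lf)` for bounded `f, g`, and in particular (taking
`g ≡ 1`) `ν_φ^Λ(Lf) = 0`: the product measure is a reversible stationary measure. -/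
theorem detailed_balance_product_measure_reversible
    {Λ : Type*} [Fintype Λ] [DecidableEq Λ] [Nonempty Λ]
    (p : Λ → Λ → ℝ) (hp : ∀ x y, 0 ≤ p x y) (hpdiag : ∀ x, p x x = 0)
    (lam : Λ → ℝ) (hlam : ∀ x, 0 < lam x)
    (hdb : ∀ x y : Λ, lam x * p x y = lam y * p y x)
    (u : Λ → ℕ → ℝ) (hupos : ∀ x n, 0 ≤ u x n)
    (huzero : ∀ x n, u x n = 0 ↔ n = 0)
    (v : Λ → ℕ → ℝ) (hvpos : ∀ x n, 0 < v x n) (hv0 : ∀ x, v x 0 = 1)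
    (φ : ℝ) (hφ : 0 < φ)
    (hz : ∀ x : Λ, Summable (fun n => mpWeight (u x) (v x) n * (lam x * φ) ^ n))
    (hzv : ∀ x : Λ, Summable (fun n => v x n * mpWeight (u x) (v x) n * (lam x * φ) ^ n))
    (ν : (Λ → ℕ) → ℝ)
    (hν : ∀ η, ν η = ∏ x, mpWeight (u x) (v x) (η x) * (lam x * φ) ^ (η x) /
        (∑' n, mpWeight (u x) (v x) n * (lam x * φ) ^ n))
    (f g : (Λ → ℕ) → ℝ) (hf : ∃ M, ∀ η, |f η| ≤ M) (hg : ∃ M, ∀ η, |g η| ≤ M) :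
    Summable (fun η : Λ → ℕ => |ν η * (f η * genApply p u v g η)|) ∧
    Summable (fun η : Λ → ℕ => |ν η * (g η * genApply p u v f η)|) ∧
    (∑' η : Λ → ℕ, ν η * (f η * genApply p u v g η)) =
      (∑' η : Λ → ℕ, ν η * (g η * genApply p u v f η)) ∧
    (∑' η : Λ → ℕ, ν η * genApply p u v f η) = 0 :=
  detailed_balance_product_measure_reversible_general p hpdiag lam hdb u huzero v φ hz hzv ν hν f g
    hf hg
end

section
/- For every bounded function f : ℕ^Λ → ℝ, the series ∑_{η∈ℕ^Λ} ν_φ^Λ(η)·(Lf)(η) converges absolutely and equals 0; i.e. the spatially homogeneous product measures ν_φ^Λ are stationary for the process. -/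
open Filter Topology

/-- The generator `(Lf)(η) = ∑_{x,y} p(x,y)·u(η_x)·v(η_y)·(f(η^{xy}) − f(η))`. -/
noncomputable def genApplyHom {Λ : Type*} [Fintype Λ] [DecidableEq Λ]
    (p : Λ → Λ → ℝ) (u v : ℕ → ℝ) (f : (Λ → ℕ) → ℝ) (η : Λ → ℕ) : ℝ :=
  ∑ x, ∑ y, p x y * u (η x) * v (η y) * (f (moveConf η x y) - f η)

/-!
With `π n = w n φ ^ n / z(φ)` the one-site marginal, the definition of `w` gives
`u (n + 1) π (n + 1) = φ v n π n`. Hence each jump is in detailed balance: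
`ν η u(η_x) v(η_y) = ν η^{xy} u(η^{xy}_y) v(η^{xy}_x)`, and the substitution `ζ = η^{xy}`
turns `∑_η ν η u(η_x) v(η_y) f(η^{xy})` into `∑_ζ ν ζ u(ζ_y) v(ζ_x) f ζ`. The relation between
`u` and `v` then reduces the contribution of the pair `(x, y)` to `p(x,y) (A_y - A_x)` with
`A_x = ∑_η ν η f η u(η_x)`, and `∑_{x,y} p(x,y) (A_y - A_x) = 0` because in- and out-rates
agree. All series converge absolutely since `π`, `u π` and `v π` are summable on `ℕ` and
`ν` is a finite product of them.
-/

open Finset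

universe u

theorem summable_prod_apply_of_nonneg {ι : Type u} {α : Type*} [Fintype ι] {g : ι → α → ℝ}
    (hg₀ : ∀ i a, 0 ≤ g i a) (hg : ∀ i, Summable (g i)) :
    Summable fun η : ι → α => ∏ i, g i (η i) := by
  suffices h : ∀ (κ : Type u) [Finite κ] [Fintype κ] (g : κ → α → ℝ), (∀ i a, 0 ≤ g i a) →
      (∀ i, Summable (g i)) → Summable fun η : κ → α => ∏ i, g i (η i) from h ι g hg₀ hg
  intro κ _
  induction κ using Finite.induction_empty_option with
  | of_equiv e ih =>
    intro _ g hg₀ hg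
    have := Fintype.ofEquiv _ e.symm
    have := ih (fun i => g (e i)) (fun i => hg₀ (e i)) (fun i => hg (e i))
    refine ((Equiv.arrowCongr e (Equiv.refl α)).symm.summable_iff.mpr this).congr fun η => ?_
    exact e.prod_comp (fun i => g i (η i))
  | h_empty => exact fun _ _ _ => Summable.of_finite
  | h_option ih =>
    intro _ g hg₀ hg
    have := (hg none).mul_of_nonneg (ih (fun i => g (some i)) (fun i => hg₀ _) (fun i => hg _))
      (hg₀ none) fun η => prod_nonneg fun i _ => hg₀ _ _
    refine (Equiv.piOptionEquivProd.summable_iff.mpr this).congr fun η => ?_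
    show g none (η none) * ∏ i, g (some i) (η (some i)) = _
    convert (Fintype.prod_option fun i => g i (η i)).symm

theorem Summable.mul_of_abs_le {β : Type*} {h g : β → ℝ} {M : ℝ} (hh : Summable h)
    (hg : ∀ b, |g b| ≤ M) : Summable fun b => h b * g b :=
  (hh.abs.mul_right M).of_norm_bounded fun b => by
    rw [Real.norm_eq_abs, abs_mul]
    exact mul_le_mul_of_nonneg_left (hg b) (abs_nonneg _)

theorem mpWeight_succ {u v : ℕ → ℝ} {n : ℕ} (hu : u (n + 1) ≠ 0) :
    u (n + 1) * mpWeight u v (n + 1) = v n * mpWeight u v n := by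
  rw [mpWeight, prod_Icc_succ_top (by omega), ← mpWeight, Nat.add_sub_cancel]
  field_simp

section moveConf

variable {Λ : Type*} [DecidableEq Λ] {η : Λ → ℕ} {x y z : Λ}

theorem moveConf_apply_left (hxy : x ≠ y) : moveConf η x y x = η x - 1 := by
  simp [moveConf, hxy]

theorem moveConf_apply_right (hxy : x ≠ y) : moveConf η x y y = η y + 1 := by
  simp [moveConf, hxy.symm]

theorem moveConf_apply_of_ne (hx : z ≠ x) (hy : z ≠ y) : moveConf η x y z = η z := by
  simp [moveConf, hx, hy]

theorem moveConf_self (h : 1 ≤ η x) : moveConf η x x = η := by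
  funext z
  by_cases hz : z = x
  · subst hz; simp [moveConf]; omega
  · simp [moveConf, hz]

theorem moveConf_moveConf (hxy : x ≠ y) (h : 1 ≤ η x) : moveConf (moveConf η x y) y x = η := by
  funext z
  by_cases hzx : z = x
  · subst hzx; simp [moveConf, hxy]; omega
  · by_cases hzy : z = y
    · subst hzy; simp [moveConf, hzx]
    · simp [moveConf, hzx, hzy]

def moveConfEquiv (hxy : x ≠ y) : {η : Λ → ℕ // 1 ≤ η x} ≃ {ζ : Λ → ℕ // 1 ≤ ζ y} where
  toFun η := ⟨moveConf η x y, by rw [moveConf_apply_right hxy]; omega⟩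
  invFun ζ := ⟨moveConf ζ y x, by rw [moveConf_apply_right hxy.symm]; omega⟩
  left_inv η := Subtype.ext (moveConf_moveConf hxy η.2)
  right_inv ζ := Subtype.ext (moveConf_moveConf hxy.symm ζ.2)

theorem tsum_eq_tsum_of_moveConf {α : Type*} [AddCommMonoid α] [TopologicalSpace α]
    (hxy : x ≠ y) {G H : (Λ → ℕ) → α} (hG : ∀ η, η x = 0 → G η = 0)
    (hH : ∀ ζ, ζ y = 0 → H ζ = 0) (hGH : ∀ η, 1 ≤ η x → G η = H (moveConf η x y)) :
    ∑' η, G η = ∑' ζ, H ζ := by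
  have support_subset {K : (Λ → ℕ) → α} {w : Λ} (hK : ∀ η, η w = 0 → K η = 0) :
      Function.support K ⊆ {η | 1 ≤ η w} :=
    fun η hη => Nat.one_le_iff_ne_zero.mpr fun h => hη (hK η h)
  rw [← tsum_subtype_eq_of_support_subset (support_subset hG),
    ← tsum_subtype_eq_of_support_subset (support_subset hH)]
  exact (tsum_congr fun η : {η : Λ → ℕ // 1 ≤ η x} => hGH η η.2).trans
    ((moveConfEquiv hxy).tsum_eq fun ζ => H ζ)

theorem mul_sub_moveConf_self_eq_zero {u v : ℕ → ℝ} (hu0 : u 0 = 0) (f : (Λ → ℕ) → ℝ)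
    (η : Λ → ℕ) (x : Λ) :
    u (η x) * v (η x) * (f (moveConf η x x) - f η) = 0 := by
  rcases Nat.eq_zero_or_pos (η x) with h | h
  · simp [h, hu0]
  · simp [moveConf_self h]

end moveConf

theorem sum_sum_mul_sub_eq_zero {Λ : Type*} [Fintype Λ] {p : Λ → Λ → ℝ}
    (hbal : ∀ x, ∑ y, p x y = ∑ y, p y x) (a : Λ → ℝ) :
    ∑ x, ∑ y, p x y * (a y - a x) = 0 := by
  simp only [mul_sub, sum_sub_distrib, ← sum_mul]
  rw [sum_comm]
  simp only [← sum_mul, hbal, sub_self]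

section ProductMeasure

variable {Λ : Type*} [Fintype Λ] {u v π : ℕ → ℝ}

theorem summable_prod_mul_prod {a : Λ → ℕ → ℝ} (ha : ∀ z, Summable fun n => a z n * π n) :
    Summable fun η : Λ → ℕ => (∏ z, a z (η z)) * ∏ z, π (η z) :=
  summable_abs_iff.mp <| by
    simpa only [← prod_mul_distrib, abs_prod] using
      summable_prod_apply_of_nonneg (fun z n => abs_nonneg (a z n * π n)) fun z => (ha z).abs

variable [DecidableEq Λ] {x y : Λ}

theorem prod_moveConf_mul {c : ℝ} (hπ : ∀ n, u (n + 1) * π (n + 1) = c * (v n * π n))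
    (hxy : x ≠ y) {η : Λ → ℕ} (hx : 1 ≤ η x) :
    (∏ z, π (moveConf η x y z)) * u (moveConf η x y y) * v (moveConf η x y x) =
      (∏ z, π (η z)) * u (η x) * v (η y) := by
  have split (ξ : Λ → ℕ) : ∏ z, π (ξ z) = π (ξ x) * π (ξ y) * ∏ z ∈ {x, y}ᶜ, π (ξ z) := by
    rw [← prod_mul_prod_compl {x, y}, prod_pair hxy]
  have rest : ∏ z ∈ {x, y}ᶜ, π (moveConf η x y z) = ∏ z ∈ {x, y}ᶜ, π (η z) :=
    prod_congr rfl fun z hz => by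
      simp only [mem_compl, mem_insert, mem_singleton, not_or] at hz
      rw [moveConf_apply_of_ne hz.1 hz.2]
  obtain ⟨n, hn⟩ : ∃ n, η x = n + 1 := ⟨η x - 1, by omega⟩
  rw [split, split, rest, moveConf_apply_left hxy, moveConf_apply_right hxy, hn,
    Nat.add_sub_cancel]
  set R := ∏ z ∈ {x, y}ᶜ, π (η z)
  linear_combination (R * v n * π n) * hπ (η y) - (R * v (η y) * π (η y)) * hπ n

theorem summable_apply_mul_prod {F : ℕ → ℝ} (hπ : Summable π)
    (hF : Summable fun n => F n * π n) (x : Λ) :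
    Summable fun η : Λ → ℕ => F (η x) * ∏ z, π (η z) := by
  have := summable_prod_mul_prod (π := π) (a := fun z n => if z = x then F n else 1) fun z => by
    by_cases hz : z = x <;> simp [hz, hF, hπ]
  simpa only [apply_ite, Fintype.prod_ite_eq'] using this

theorem summable_apply_mul_apply_mul_prod {F G : ℕ → ℝ} (hxy : x ≠ y) (hπ : Summable π)
    (hF : Summable fun n => F n * π n) (hG : Summable fun n => G n * π n) :
    Summable fun η : Λ → ℕ => F (η x) * G (η y) * ∏ z, π (η z) := by
  have := summable_prod_mul_prod (π := π)
    (a := fun z n => (if z = x then F n else 1) * (if z = y then G n else 1)) fun z => by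
      by_cases hzx : z = x
      · subst hzx; simp [hxy, hF]
      · by_cases hzy : z = y
        · subst hzy; simp [hzx, hG]
        · simp [hzx, hzy, hπ]
  simpa only [prod_mul_distrib, Fintype.prod_ite_eq'] using this

theorem summable_prod_mul_jump (hu0 : u 0 = 0) (hπ : Summable π)
    (huπ : Summable fun n => u n * π n) (hvπ : Summable fun n => v n * π n)
    {f : (Λ → ℕ) → ℝ} {M : ℝ} (hf : ∀ η, |f η| ≤ M) (x y : Λ) :
    Summable fun η : Λ → ℕ =>
      (∏ z, π (η z)) * (u (η x) * v (η y) * (f (moveConf η x y) - f η)) := by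
  by_cases hxy : x = y
  · subst hxy
    simp [mul_sub_moveConf_self_eq_zero hu0]
  · refine ((summable_apply_mul_apply_mul_prod hxy hπ huπ hvπ).mul_of_abs_le
      (g := fun η => f (moveConf η x y) - f η)
      fun η => (abs_sub _ _).trans (add_le_add (hf _) (hf _))).congr fun η => by ring

theorem tsum_prod_mul_jump {c : ℝ} (hπrec : ∀ n, u (n + 1) * π (n + 1) = c * (v n * π n))
    (hu0 : u 0 = 0) (hcompat : ∀ n m : ℕ, u n * v m - u m * v n = u n - u m)
    (hπ : Summable π) (huπ : Summable fun n => u n * π n) (hvπ : Summable fun n => v n * π n)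
    {f : (Λ → ℕ) → ℝ} {M : ℝ} (hf : ∀ η, |f η| ≤ M) (x y : Λ) :
    ∑' η : Λ → ℕ, (∏ z, π (η z)) * (u (η x) * v (η y) * (f (moveConf η x y) - f η)) =
      ∑' η : Λ → ℕ, (∏ z, π (η z)) * f η * u (η y) -
        ∑' η : Λ → ℕ, (∏ z, π (η z)) * f η * u (η x) := by
  by_cases hxy : x = y
  · subst hxy
    simp [mul_sub_moveConf_self_eq_zero hu0]
  have hrate (a b : Λ) (hab : a ≠ b) (g : (Λ → ℕ) → ℝ) (hg : ∀ η, |g η| ≤ M) :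
      Summable fun η : Λ → ℕ => (∏ z, π (η z)) * (u (η a) * v (η b) * g η) :=
    ((summable_apply_mul_apply_mul_prod hab hπ huπ hvπ).mul_of_abs_le hg).congr fun η => by ring
  have hsite (a : Λ) : Summable fun η : Λ → ℕ => (∏ z, π (η z)) * f η * u (η a) :=
    ((summable_apply_mul_prod hπ huπ a).mul_of_abs_le hf).congr fun η => by ring
  have hmove : ∑' η : Λ → ℕ, (∏ z, π (η z)) * (u (η x) * v (η y) * f (moveConf η x y)) =
      ∑' ζ : Λ → ℕ, (∏ z, π (ζ z)) * (u (ζ y) * v (ζ x) * f ζ) :=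
    tsum_eq_tsum_of_moveConf hxy (fun η h => by simp [h, hu0]) (fun ζ h => by simp [h, hu0])
      fun η hη => by linear_combination f (moveConf η x y) * (prod_moveConf_mul hπrec hxy hη).symm
  calc _ = ∑' η : Λ → ℕ, (∏ z, π (η z)) * (u (η x) * v (η y) * f (moveConf η x y)) -
        ∑' η : Λ → ℕ, (∏ z, π (η z)) * (u (η x) * v (η y) * f η) := by
        rw [← (hrate x y hxy _ fun η => hf _).tsum_sub (hrate x y hxy f hf)]
        exact tsum_congr fun η => by ring
    _ = ∑' η : Λ → ℕ, (∏ z, π (η z)) * (u (η y) * v (η x) * f η) -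
        ∑' η : Λ → ℕ, (∏ z, π (η z)) * (u (η x) * v (η y) * f η) := by rw [hmove]
    _ = ∑' η : Λ → ℕ, ((∏ z, π (η z)) * f η * u (η y) - (∏ z, π (η z)) * f η * u (η x)) := by
        rw [← (hrate y x (Ne.symm hxy) f hf).tsum_sub (hrate x y hxy f hf)]
        exact tsum_congr fun η => by
          linear_combination (∏ z, π (η z)) * f η * hcompat (η y) (η x)
    _ = _ := (hsite y).tsum_sub (hsite x)

theorem summable_and_tsum_prod_mul_genApplyHom_eq_zero {p : Λ → Λ → ℝ}
    (hbal : ∀ x, ∑ y, p x y = ∑ y, p y x) {c : ℝ}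
    (hπrec : ∀ n, u (n + 1) * π (n + 1) = c * (v n * π n)) (hu0 : u 0 = 0)
    (hcompat : ∀ n m : ℕ, u n * v m - u m * v n = u n - u m)
    (hπ : Summable π) (hvπ : Summable fun n => v n * π n)
    {f : (Λ → ℕ) → ℝ} (hf : ∃ M, ∀ η, |f η| ≤ M) :
    Summable (fun η : Λ → ℕ => |(∏ z, π (η z)) * genApplyHom p u v f η|) ∧
      ∑' η : Λ → ℕ, (∏ z, π (η z)) * genApplyHom p u v f η = 0 := by
  obtain ⟨M, hM⟩ := hf
  have huπ : Summable fun n => u n * π n :=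
    (summable_nat_add_iff 1).mp <| (hvπ.mul_left c).congr fun n => (hπrec n).symm
  have hjump (x y : Λ) := (summable_prod_mul_jump hu0 hπ huπ hvπ hM x y).mul_left (p x y)
  have hexpand (η : Λ → ℕ) : (∏ z, π (η z)) * genApplyHom p u v f η = ∑ x, ∑ y, p x y *
      ((∏ z, π (η z)) * (u (η x) * v (η y) * (f (moveConf η x y) - f η))) := by
    simp only [genApplyHom, mul_sum]
    exact sum_congr rfl fun x _ => sum_congr rfl fun y _ => by ring
  simp only [hexpand]
  refine ⟨(summable_sum fun x _ => summable_sum fun y _ => hjump x y).abs, ?_⟩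
  rw [Summable.tsum_finsetSum fun x _ => summable_sum fun y _ => hjump x y]
  simp only [Summable.tsum_finsetSum fun y _ => hjump _ y, tsum_mul_left,
    tsum_prod_mul_jump hπrec hu0 hcompat hπ huπ hvπ hM]
  exact sum_sum_mul_sub_eq_zero hbal _

end ProductMeasure

theorem homogeneous_product_measure_stationary_general
    {Λ : Type*} [Fintype Λ] [DecidableEq Λ]
    (p : Λ → Λ → ℝ)
    (hbal : ∀ x : Λ, ∑ y, p x y = ∑ y, p y x)
    (u : ℕ → ℝ) (huzero : ∀ n, u n = 0 ↔ n = 0)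
    (v : ℕ → ℝ)
    (hcompat : ∀ n m : ℕ, u n * v m - u m * v n = u n - u m)
    (φ : ℝ)
    (hz : Summable (fun n => mpWeight u v n * φ ^ n))
    (hzv : Summable (fun n => v n * mpWeight u v n * φ ^ n))
    (ν : (Λ → ℕ) → ℝ)
    (hν : ∀ η, ν η = ∏ x, mpWeight u v (η x) * φ ^ (η x) /
        (∑' n, mpWeight u v n * φ ^ n))
    (f : (Λ → ℕ) → ℝ) (hf : ∃ M, ∀ η, |f η| ≤ M) :
    Summable (fun η : Λ → ℕ => |ν η * genApplyHom p u v f η|) ∧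
    (∑' η : Λ → ℕ, ν η * genApplyHom p u v f η) = 0 := by
  obtain rfl : ν = fun η => ∏ x, mpWeight u v (η x) * φ ^ (η x) /
      ∑' n, mpWeight u v n * φ ^ n := funext hν
  set Z := ∑' n, mpWeight u v n * φ ^ n
  have hπrec (n : ℕ) : u (n + 1) * (mpWeight u v (n + 1) * φ ^ (n + 1) / Z) =
      φ * (v n * (mpWeight u v n * φ ^ n / Z)) := by
    rw [pow_succ]
    linear_combination (φ ^ n * φ / Z) * mpWeight_succ ((huzero (n + 1)).not.mpr n.succ_ne_zero)
  exact summable_and_tsum_prod_mul_genApplyHom_eq_zero hbal hπrec ((huzero 0).mpr rfl) hcompat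
    (hz.div_const Z) ((hzv.div_const Z).congr fun n => by ring) hf

/-- If in- and out-rates agree at every site and `u(n)v(m) − u(m)v(n) = u(n) − u(m)`,
then for every bounded `f` the series `∑_η ν_φ^Λ(η)·(Lf)(η)` converges absolutely and
equals `0`: the homogeneous product measures are stationary. -/
theorem homogeneous_product_measure_stationary
    {Λ : Type*} [Fintype Λ] [DecidableEq Λ] [Nonempty Λ]
    (p : Λ → Λ → ℝ) (hp : ∀ x y, 0 ≤ p x y) (hpdiag : ∀ x, p x x = 0)
    (hbal : ∀ x : Λ, ∑ y, p x y = ∑ y, p y x)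
    (u : ℕ → ℝ) (hupos : ∀ n, 0 ≤ u n) (huzero : ∀ n, u n = 0 ↔ n = 0)
    (v : ℕ → ℝ) (hvpos : ∀ n, 0 < v n) (hv0 : v 0 = 1)
    (hcompat : ∀ n m : ℕ, u n * v m - u m * v n = u n - u m)
    (φ : ℝ) (hφ : 0 < φ)
    (hz : Summable (fun n => mpWeight u v n * φ ^ n))
    (hzv : Summable (fun n => v n * mpWeight u v n * φ ^ n))
    (ν : (Λ → ℕ) → ℝ)
    (hν : ∀ η, ν η = ∏ x, mpWeight u v (η x) * φ ^ (η x) /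
        (∑' n, mpWeight u v n * φ ^ n))
    (f : (Λ → ℕ) → ℝ) (hf : ∃ M, ∀ η, |f η| ≤ M) :
    Summable (fun η : Λ → ℕ => |ν η * genApplyHom p u v f η|) ∧
    (∑' η : Λ → ℕ, ν η * genApplyHom p u v f η) = 0 :=
  homogeneous_product_measure_stationary_general p hbal u huzero v hcompat φ hz hzv ν hν f hf
end

section
/- (i) If γ > 1, then n^γ·w(n) converges as n → ∞ to a limit in (0,∞) (power-law decay of the stationary weights). (ii) If γ > 2, then z(1) < ∞ and ∑_n n·w(n) < ∞, so the explosive condensation model condenses with finite critical density ρ_c = (∑_n n·w(n))/z(1), while the grand-canonical current diverges at criticality: j_gc(φ) = φ·(∑_{n≥0} v(n)·w(n)·φ^n / z(φ))² → ∞ as φ ↗ 1. -/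
open Filter Topology

/-- Stationary weights of the explosive condensation model:
`w(n) = ∏_{k=1}^n (k−1+d)^γ / ((k+d)^γ − d^γ)`. -/
noncomputable def ecmW (d γ : ℝ) (n : ℕ) : ℝ :=
  ∏ k ∈ Finset.Icc 1 n, ((k : ℝ) - 1 + d) ^ γ / (((k : ℝ) + d) ^ γ - d ^ γ)

/-!
The recursion `((n+1+d)^γ - d^γ) w(n+1) = (n+d)^γ w(n)` telescopes to the identity
`v(n) w(n) = d^γ S(n)`, where `S(n) = ∑_{k ≤ n} w(k)`. Consequently
`S(n+1) = S(n) (1 + d^γ / ((n+1+d)^γ - d^γ))`, a product that converges for `γ > 1`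
because `(n+1+d)^γ - d^γ ≥ (n+1)^γ`; so `z(1) < ∞` and `n^γ w(n) → d^γ z(1)`.
Multiplying the identity by `φ^n` and summing gives `ν_φ^1(v) = d^γ / (1 - φ)` exactly,
hence `j_gc(φ) = φ d^{2γ} / (1 - φ)^2`.
-/

open Finset Real

lemma summable_rpow_mul_of_tendsto_rpow_mul {f : ℕ → ℝ} {p q c : ℝ} (hpq : q + 1 < p)
    (h : Tendsto (fun n : ℕ => (n : ℝ) ^ p * f n) atTop (𝓝 c)) :
    Summable fun n : ℕ => (n : ℝ) ^ q * f n := by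
  have hO : (fun n : ℕ => (n : ℝ) ^ q * f n) =O[atTop] fun n : ℕ => (n : ℝ) ^ (q - p) := by
    refine ((h.isBigO_one ℝ).mul (Asymptotics.isBigO_refl _ atTop)).congr' ?_
      (Eventually.of_forall fun _ => one_mul _)
    filter_upwards [eventually_ne_atTop 0] with n hn
    have hn : (0 : ℝ) < n := by positivity
    rw [rpow_sub hn]
    field_simp
  exact summable_of_isBigO_nat (summable_nat_rpow.mpr (by linarith)) hO

lemma tsum_sum_range_mul_pow {𝕜 : Type*} [NormedField 𝕜] [CompleteSpace 𝕜] {f : ℕ → 𝕜}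
    {φ : 𝕜} (hf : Summable fun n => ‖f n * φ ^ n‖) (hφ : ‖φ‖ < 1) :
    ∑' n, (∑ k ∈ range (n + 1), f k) * φ ^ n = (∑' n, f n * φ ^ n) / (1 - φ) := by
  rw [div_eq_mul_inv, ← tsum_geometric_of_norm_lt_one hφ,
    tsum_mul_tsum_eq_tsum_sum_range_of_summable_norm hf
      (summable_norm_geometric_of_norm_lt_one hφ)]
  refine tsum_congr fun n => ?_
  rw [sum_mul]
  refine sum_congr rfl fun k hk => ?_
  rw [mul_assoc, pow_mul_pow_sub φ (Nat.lt_succ_iff.mp (mem_range.mp hk))]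

lemma tendsto_mul_div_one_sub_sq_atTop {C : ℝ} (hC : 0 < C) :
    Tendsto (fun φ : ℝ => φ * (C / (1 - φ)) ^ 2) (𝓝[<] 1) atTop := by
  have hgap : Tendsto (fun φ : ℝ => 1 - φ) (𝓝[<] 1) (𝓝[>] 0) := by
    refine tendsto_nhdsWithin_iff.mpr ⟨?_, ?_⟩
    · exact ((continuous_const.sub continuous_id).tendsto' 1 0 (sub_self 1)).mono_left
        nhdsWithin_le_nhds
    · filter_upwards [self_mem_nhdsWithin] with φ hφ
      exact sub_pos.mpr (Set.mem_Iio.mp hφ)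
  have hblow : Tendsto (fun φ : ℝ => (C / (1 - φ)) ^ 2) (𝓝[<] 1) atTop := by
    simp_rw [div_eq_mul_inv]
    exact (tendsto_pow_atTop two_ne_zero).comp
      ((tendsto_inv_nhdsGT_zero.comp hgap).const_mul_atTop hC)
  exact (tendsto_nhdsWithin_of_tendsto_nhds tendsto_id).pos_mul_atTop one_pos hblow

section ecmW

variable {d γ : ℝ}

@[simp]
lemma ecmW_zero (d γ : ℝ) : ecmW d γ 0 = 1 := by simp [ecmW]

lemma ecmW_succ (d γ : ℝ) (n : ℕ) :
    ecmW d γ (n + 1) = ecmW d γ n * ((n + d) ^ γ / ((n + 1 + d) ^ γ - d ^ γ)) := by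
  unfold ecmW
  rw [prod_Icc_succ_top (Nat.le_add_left 1 n)]
  congr 1
  push_cast
  ring_nf

lemma rpow_add_sub_rpow_pos (hd : 0 < d) (hγ : 0 < γ) {x : ℝ} (hx : 0 < x) :
    0 < (x + d) ^ γ - d ^ γ :=
  sub_pos.mpr (rpow_lt_rpow hd.le (by linarith) hγ)

lemma ecmW_pos (hd : 0 < d) (hγ : 0 < γ) (n : ℕ) : 0 < ecmW d γ n := by
  induction n with
  | zero => simp
  | succ n ih =>
    have := rpow_add_sub_rpow_pos hd hγ (x := n + 1) (by positivity)
    rw [ecmW_succ]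
    positivity

lemma add_rpow_mul_ecmW (hd : 0 < d) (hγ : 0 < γ) (n : ℕ) :
    ((n : ℝ) + d) ^ γ * ecmW d γ n = d ^ γ * ∑ k ∈ range (n + 1), ecmW d γ k := by
  induction n with
  | zero => simp
  | succ n ih =>
    have hD := rpow_add_sub_rpow_pos hd hγ (x := n + 1) (by positivity)
    have hstep : (((n : ℝ) + 1 + d) ^ γ - d ^ γ) * ecmW d γ (n + 1)
        = ((n : ℝ) + d) ^ γ * ecmW d γ n := by
      rw [ecmW_succ]
      field_simp
    rw [sum_range_succ, mul_add, ← ih]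
    push_cast
    linarith

noncomputable def ecmGrowth (d γ : ℝ) (k : ℕ) : ℝ :=
  d ^ γ / (((k : ℝ) + 1 + d) ^ γ - d ^ γ)

lemma ecmGrowth_nonneg (hd : 0 < d) (hγ : 0 < γ) (k : ℕ) : 0 ≤ ecmGrowth d γ k :=
  div_nonneg (by positivity) (rpow_add_sub_rpow_pos hd hγ (x := k + 1) (by positivity)).le

lemma sum_range_ecmW_succ (hd : 0 < d) (hγ : 0 < γ) (n : ℕ) :
    ∑ k ∈ range (n + 2), ecmW d γ k
      = (∑ k ∈ range (n + 1), ecmW d γ k) * (1 + ecmGrowth d γ n) := by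
  have hw : ecmW d γ (n + 1) = d ^ γ * (∑ k ∈ range (n + 1), ecmW d γ k)
      / ((n + 1 + d) ^ γ - d ^ γ) := by
    rw [ecmW_succ, ← add_rpow_mul_ecmW hd hγ n]
    ring
  rw [sum_range_succ _ (n + 1), hw, ecmGrowth]
  ring

lemma sum_range_ecmW_le_exp (hd : 0 < d) (hγ : 0 < γ) (n : ℕ) :
    ∑ k ∈ range (n + 1), ecmW d γ k
      ≤ exp (∑ k ∈ range n, ecmGrowth d γ k) := by
  induction n with
  | zero => simp
  | succ n ih =>
    have := ecmGrowth_nonneg hd hγ n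
    rw [sum_range_ecmW_succ hd hγ, sum_range_succ (ecmGrowth d γ), exp_add]
    gcongr
    linarith [add_one_le_exp (ecmGrowth d γ n)]

lemma summable_ecmGrowth (hd : 0 < d) (hγ : 1 < γ) : Summable (ecmGrowth d γ) := by
  have hp : Summable fun k : ℕ => d ^ γ / ((k : ℝ) + 1) ^ γ := by
    have := ((summable_nat_add_iff 1).mpr (summable_nat_rpow_inv.mpr hγ)).mul_left (d ^ γ)
    simpa [div_eq_mul_inv] using this
  refine hp.of_nonneg_of_le (ecmGrowth_nonneg hd (by linarith)) fun k => ?_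
  have hsuper := add_rpow_le_rpow_add (by positivity : (0 : ℝ) ≤ k + 1) hd.le hγ.le
  rw [ecmGrowth]
  gcongr
  linarith

theorem summable_ecmW (hd : 0 < d) (hγ : 1 < γ) : Summable (ecmW d γ) := by
  have hγ0 : 0 < γ := by linarith
  refine summable_of_sum_range_le (c := exp (∑' k, ecmGrowth d γ k))
    (fun n => (ecmW_pos hd hγ0 n).le) fun n => ?_
  calc ∑ k ∈ range n, ecmW d γ k ≤ ∑ k ∈ range (n + 1), ecmW d γ k :=
        sum_le_sum_of_subset_of_nonneg (range_subset_range.mpr n.le_succ)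
          fun k _ _ => (ecmW_pos hd hγ0 k).le
    _ ≤ exp (∑ k ∈ range n, ecmGrowth d γ k) := sum_range_ecmW_le_exp hd hγ0 n
    _ ≤ exp (∑' k, ecmGrowth d γ k) :=
        exp_le_exp.mpr ((summable_ecmGrowth hd hγ).sum_le_tsum _
          fun k _ => ecmGrowth_nonneg hd hγ0 k)

theorem tendsto_rpow_mul_ecmW (hd : 0 < d) (hγ : 1 < γ) :
    Tendsto (fun n : ℕ => (n : ℝ) ^ γ * ecmW d γ n) atTop (𝓝 (d ^ γ * ∑' n, ecmW d γ n)) := by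
  have hγ0 : 0 < γ := by linarith
  have hpartial : Tendsto (fun n => ∑ k ∈ range (n + 1), ecmW d γ k) atTop
      (𝓝 (∑' n, ecmW d γ n)) :=
    (summable_ecmW hd hγ).hasSum.tendsto_sum_nat.comp (tendsto_add_atTop_nat 1)
  have hratio : Tendsto (fun n : ℕ => ((n : ℝ) / (n + d)) ^ γ) atTop (𝓝 1) := by
    simpa using (tendsto_natCast_div_add_atTop d).rpow_const (Or.inl one_ne_zero)
  refine (one_mul (d ^ γ * _) ▸ hratio.mul (hpartial.const_mul (d ^ γ))).congr fun n => ?_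
  have hnd : (0 : ℝ) < n + d := by positivity
  rw [← add_rpow_mul_ecmW hd hγ0, div_rpow (by positivity) hnd.le]
  field_simp

lemma ecm_current_eq (hd : 0 < d) (hγ : 0 < γ) (hw : Summable (ecmW d γ)) {φ : ℝ}
    (hφ₀ : 0 ≤ φ) (hφ₁ : φ < 1) :
    φ * ((∑' n : ℕ, ((n : ℝ) + d) ^ γ * ecmW d γ n * φ ^ n) /
      (∑' n : ℕ, ecmW d γ n * φ ^ n)) ^ 2 = φ * (d ^ γ / (1 - φ)) ^ 2 := by
  have hnorm : Summable fun n => ‖ecmW d γ n * φ ^ n‖ := by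
    refine hw.of_nonneg_of_le (fun _ => norm_nonneg _) fun n => ?_
    rw [norm_mul, norm_pow, norm_of_nonneg (ecmW_pos hd hγ n).le, norm_of_nonneg hφ₀]
    exact mul_le_of_le_one_right (ecmW_pos hd hγ n).le (pow_le_one₀ hφ₀ hφ₁.le)
  have hz : 0 < ∑' n : ℕ, ecmW d γ n * φ ^ n := by
    refine lt_of_lt_of_le one_pos ?_
    simpa using hnorm.of_norm.le_tsum 0 fun n _ => by
      have := ecmW_pos hd hγ n
      positivity
  have hnum : ∑' n : ℕ, ((n : ℝ) + d) ^ γ * ecmW d γ n * φ ^ n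
      = d ^ γ * ((∑' n : ℕ, ecmW d γ n * φ ^ n) / (1 - φ)) := by
    rw [← tsum_sum_range_mul_pow hnorm (by rwa [norm_of_nonneg hφ₀]), ← tsum_mul_left]
    simp_rw [add_rpow_mul_ecmW hd hγ, mul_assoc]
  have hgap : 0 < 1 - φ := by linarith
  rw [hnum]
  field_simp

end ecmW

theorem ecm_condensation_general (d γ : ℝ) (hd : 0 < d) :
    (1 < γ → ∃ c : ℝ, 0 < c ∧
      Tendsto (fun n : ℕ => (n : ℝ) ^ γ * ecmW d γ n) atTop (𝓝 c)) ∧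
    (2 < γ →
      Summable (ecmW d γ) ∧
      Summable (fun n : ℕ => (n : ℝ) * ecmW d γ n) ∧
      Tendsto (fun φ : ℝ => φ *
          ((∑' n : ℕ, ((n : ℝ) + d) ^ γ * ecmW d γ n * φ ^ n) /
            (∑' n : ℕ, ecmW d γ n * φ ^ n)) ^ 2)
        (𝓝[<] (1 : ℝ)) atTop) := by
  have power_law (hγ : 1 < γ) : ∃ c : ℝ, 0 < c ∧
      Tendsto (fun n : ℕ => (n : ℝ) ^ γ * ecmW d γ n) atTop (𝓝 c) :=
    ⟨_, mul_pos (rpow_pos_of_pos hd γ)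
      ((summable_ecmW hd hγ).tsum_pos (fun n => (ecmW_pos hd (by linarith) n).le) 0 (by simp)),
      tendsto_rpow_mul_ecmW hd hγ⟩
  refine ⟨power_law, fun hγ => ⟨summable_ecmW hd (by linarith), ?_, ?_⟩⟩
  · obtain ⟨c, -, hc⟩ := power_law (by linarith)
    simpa using summable_rpow_mul_of_tendsto_rpow_mul (q := 1) (by linarith) hc
  · refine (tendsto_mul_div_one_sub_sq_atTop (rpow_pos_of_pos hd γ)).congr' ?_
    filter_upwards [Ioo_mem_nhdsLT one_pos] with φ hφ
    exact (ecm_current_eq hd (by linarith) (summable_ecmW hd (by linarith)) hφ.1.le hφ.2).symm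

/-- (i) For `γ > 1` the stationary weights decay like a power law,
`n^γ·w(n) → c ∈ (0,∞)`; (ii) for `γ > 2` the explosive condensation model condenses,
`z(1) < ∞` and `∑ n·w(n) < ∞` (so `ρ_c = (∑ n·w(n))/z(1) < ∞`), while the
grand-canonical current `j_gc(φ) = φ·(ν_φ^1(v))²` diverges as `φ ↗ 1`. -/
theorem ecm_condensation (d γ : ℝ) (hd : 0 < d) (hγ : 0 < γ) :
    (1 < γ → ∃ c : ℝ, 0 < c ∧
      Tendsto (fun n : ℕ => (n : ℝ) ^ γ * ecmW d γ n) atTop (𝓝 c)) ∧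
    (2 < γ →
      Summable (ecmW d γ) ∧
      Summable (fun n : ℕ => (n : ℝ) * ecmW d γ n) ∧
      Tendsto (fun φ : ℝ => φ *
          ((∑' n : ℕ, ((n : ℝ) + d) ^ γ * ecmW d γ n * φ ^ n) /
            (∑' n : ℕ, ecmW d γ n * φ ^ n)) ^ 2)
        (𝓝[<] (1 : ℝ)) atTop) :=
  ecm_condensation_general d γ hd
end

section
/- (i) If γ = 1, then n^b·w(n) → Γ(1+b) as n → ∞; consequently, for b > 2, z(1) = ∑_n w(n) < ∞ and ∑_n n·w(n) < ∞, so the critical density ρ_c = (∑_n n·w(n))/z(1) is finite (condensation). (ii) If γ ∈ (0,1), then n^{γ−1}·log w(n) → −b/(1−γ) as n → ∞ (stretched-exponential decay), and ∑_n n·w(n) < ∞ for every b > 0, so ρ_c < ∞. -/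
/-! For `γ = 1` the weights are `w(n) = n! / ∏_{k ≤ n} (k + b)`, so `n^b w(n) = b · GammaSeq b n`,
which tends to `b Γ(b) = Γ(1 + b)` by Euler's limit formula; the resulting decay `w(n) = O(n^{-b})`
makes `∑ n^m w(n)` converge for `m < b - 1`.

For `γ < 1`, `-log w(n) = ∑_{k ≤ n} log(1 + b k^{-γ})` and `log(1 + x) ~ x`, so
`-log w(n) ~ b ∑_{k ≤ n} k^{-γ} ~ b n^{1-γ} / (1 - γ)`; the last equivalence compares the sum
with the telescoping sum of `((k+1)^{1-γ} - k^{1-γ}) / (1 - γ)`. The stretched-exponential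
bound `w(n) ≤ exp(-c n^{1-γ})` then beats every power of `n`. -/

open Filter Topology

/-- Stationary weights of the zero-range process with rates `u(n) = 1 + b/n^γ`:
`w(n) = ∏_{k=1}^n (1 + b/k^γ)⁻¹`. -/
noncomputable def zrpCondW (b γ : ℝ) (n : ℕ) : ℝ :=
  ∏ k ∈ Finset.Icc 1 n, (1 + b / (k : ℝ) ^ γ)⁻¹

open Asymptotics Finset

theorem Asymptotics.IsEquivalent.sum_range {u v : ℕ → ℝ} (huv : u ~[atTop] v) (hv : 0 ≤ v)
    (hv_sum : Tendsto (fun n => ∑ i ∈ range n, v i) atTop atTop) :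
    (fun n => ∑ i ∈ range n, u i) ~[atTop] fun n => ∑ i ∈ range n, v i := by
  refine IsLittleO.isEquivalent ((huv.isLittleO.sum_range hv hv_sum).congr_left fun n => ?_)
  simp only [Pi.sub_apply, sum_sub_distrib]

theorem HasDerivAt.isEquivalent_sub_comp {f : ℝ → ℝ} {f' x : ℝ} (hf : HasDerivAt f f' x)
    (hf' : f' ≠ 0) {α : Type*} {l : Filter α} {u : α → ℝ} (hu : Tendsto u l (𝓝 x)) :
    (fun t => f (u t) - f x) ~[l] fun t => f' * (u t - x) := by
  have hlin : (fun y => y - x) =O[𝓝 x] fun y => f' * (y - x) :=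
    isBigO_self_const_mul hf' _ _
  have : (fun y => f y - f x) ~[𝓝 x] fun y => f' * (y - x) := by
    refine IsLittleO.isEquivalent
      (((hasDerivAt_iff_isLittleO.1 hf).trans_isBigO hlin).congr_left fun y => ?_)
    simp only [Pi.sub_apply, smul_eq_mul, mul_comm]
  exact this.comp_tendsto hu

theorem Real.isEquivalent_log_one_add {α : Type*} {l : Filter α} {g : α → ℝ}
    (hg : Tendsto g l (𝓝 0)) : (fun t => Real.log (1 + g t)) ~[l] g := by
  have hu : Tendsto (fun t => 1 + g t) l (𝓝 1) := by
    simpa using hg.const_add 1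
  simpa using (Real.hasDerivAt_log one_ne_zero).isEquivalent_sub_comp (by norm_num) hu

theorem isEquivalent_add_one_rpow_sub_rpow {p : ℝ} (hp : p ≠ 0) :
    (fun k : ℕ => ((k : ℝ) + 1) ^ p - (k : ℝ) ^ p) ~[atTop]
      fun k => p * ((k : ℝ) + 1) ^ (p - 1) := by
  -- `(k + 1) ^ p - k ^ p = -(k + 1) ^ p * ((k / (k + 1)) ^ p - 1)`, and `k / (k + 1) → 1`
  have hderiv := (Real.hasDerivAt_rpow_const (x := 1) (p := p)
    (Or.inl one_ne_zero)).isEquivalent_sub_comp (by simpa using hp)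
    (tendsto_natCast_div_add_atTop (1 : ℝ))
  refine ((IsEquivalent.refl (u := fun k : ℕ => -((k : ℝ) + 1) ^ p)).mul hderiv).congr_left ?_
    |>.congr_right ?_
  · filter_upwards with k
    have hk : (0 : ℝ) < k + 1 := by positivity
    simp only [Pi.mul_apply, Real.one_rpow]
    rw [Real.div_rpow (by positivity) hk.le]
    field_simp
    ring
  · filter_upwards with k
    have hk : (0 : ℝ) < k + 1 := by positivity
    simp only [Pi.mul_apply, Real.one_rpow, mul_one]
    rw [Real.rpow_sub_one hk.ne']
    field_simp
    ring

theorem isEquivalent_sum_range_of_isEquivalent_rpow {f : ℕ → ℝ} {c p : ℝ} (hc : 0 < c)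
    (hp : 0 < p) (hf : f ~[atTop] fun k => c * ((k : ℝ) + 1) ^ (p - 1)) :
    (fun n => ∑ k ∈ range n, f k) ~[atTop] fun n => c / p * (n : ℝ) ^ p := by
  set v : ℕ → ℝ := fun k => c / p * (((k : ℝ) + 1) ^ p - (k : ℝ) ^ p)
  have hfv : f ~[atTop] v := by
    refine hf.trans (((IsEquivalent.refl (u := fun _ : ℕ => c / p)).mul
      (isEquivalent_add_one_rpow_sub_rpow hp.ne')).symm.congr_left ?_)
    filter_upwards with k
    simp only [Pi.mul_apply]
    field_simp
  have hv_sum : ∀ n, ∑ k ∈ range n, v k = c / p * (n : ℝ) ^ p := by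
    intro n
    rw [← mul_sum]
    congr 1
    simpa [Real.zero_rpow hp.ne'] using sum_range_sub (fun k : ℕ => (k : ℝ) ^ p) n
  have hv : 0 ≤ v := fun k => mul_nonneg (by positivity)
    (sub_nonneg.2 (Real.rpow_le_rpow (by positivity) (by linarith) hp.le))
  have htop : Tendsto (fun n : ℕ => c / p * (n : ℝ) ^ p) atTop atTop :=
    ((tendsto_rpow_atTop hp).comp tendsto_natCast_atTop_atTop).const_mul_atTop (by positivity)
  simpa only [hv_sum] using hfv.sum_range hv (by simpa only [hv_sum] using htop)

theorem Finset.prod_Icc_one_eq_prod_range {M : Type*} [CommMonoid M] (f : ℕ → M) (n : ℕ) :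
    ∏ k ∈ Icc 1 n, f k = ∏ k ∈ range n, f (k + 1) := by
  rw [range_eq_Ico, prod_Ico_add' f 0 n 1, zero_add, Ico_add_one_right_eq_Icc]

theorem log_zrpCondW {b : ℝ} (hb : 0 ≤ b) (γ : ℝ) (n : ℕ) :
    Real.log (zrpCondW b γ n) = -∑ k ∈ range n, Real.log (1 + b / ((k : ℝ) + 1) ^ γ) := by
  have hpos : ∀ k : ℕ, 0 < 1 + b / ((k : ℝ) + 1) ^ γ := fun k => by positivity
  rw [zrpCondW, prod_Icc_one_eq_prod_range]
  push_cast
  rw [Real.log_prod fun k _ => (inv_pos.2 (hpos k)).ne', ← sum_neg_distrib]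
  simp only [Real.log_inv]

theorem zrpCondW_pos {b : ℝ} (hb : 0 ≤ b) (γ : ℝ) (n : ℕ) : 0 < zrpCondW b γ n :=
  prod_pos fun k _ => by positivity

theorem isEquivalent_log_one_add_div_rpow (b : ℝ) {γ : ℝ} (hγ : 0 < γ) :
    (fun k : ℕ => Real.log (1 + b / ((k : ℝ) + 1) ^ γ)) ~[atTop]
      fun k => b * ((k : ℝ) + 1) ^ (-γ) := by
  have hdecay : Tendsto (fun k : ℕ => b * ((k : ℝ) + 1) ^ (-γ)) atTop (𝓝 0) := by
    simpa using ((tendsto_rpow_neg_atTop hγ).comp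
      (tendsto_natCast_atTop_atTop.atTop_add tendsto_const_nhds)).const_mul b
  refine (Real.isEquivalent_log_one_add hdecay).congr_left ?_
  filter_upwards with k
  rw [Real.rpow_neg (by positivity), div_eq_mul_inv]

theorem tendsto_rpow_mul_log_zrpCondW {b γ : ℝ} (hb : 0 < b) (hγ0 : 0 < γ) (hγ1 : γ < 1) :
    Tendsto (fun n : ℕ => (n : ℝ) ^ (γ - 1) * Real.log (zrpCondW b γ n)) atTop
      (𝓝 (-b / (1 - γ))) := by
  have hsum := isEquivalent_sum_range_of_isEquivalent_rpow hb (sub_pos.2 hγ1)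
    (by simpa only [sub_sub_cancel_left] using isEquivalent_log_one_add_div_rpow b hγ0)
  have h := (IsEquivalent.refl (u := fun n : ℕ => (n : ℝ) ^ (γ - 1))).mul hsum.neg
  refine h.symm.tendsto_nhds (tendsto_const_nhds.congr' ?_) |>.congr fun n => ?_
  · filter_upwards [eventually_gt_atTop 0] with n hn
    have hn' : (0 : ℝ) < n := by exact_mod_cast hn
    simp only [Pi.mul_apply]
    rw [mul_neg, ← mul_assoc, mul_comm _ (b / (1 - γ)), mul_assoc, ← Real.rpow_add hn']
    simp [neg_div]
  · simp only [Pi.mul_apply, log_zrpCondW hb.le]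

theorem isLittleO_exp_neg_mul_rpow_rpow_atTop {a s : ℝ} (ha : 0 < a) (hs : 0 < s) (r : ℝ) :
    (fun x : ℝ => Real.exp (-a * x ^ s)) =o[atTop] fun x => x ^ r := by
  refine ((isLittleO_exp_neg_mul_rpow_atTop ha (r / s)).comp_tendsto
    (tendsto_rpow_atTop hs)).congr' (.of_forall fun _ => rfl) ?_
  filter_upwards [eventually_ge_atTop 0] with x hx
  simp only [Function.comp_apply]
  rw [← Real.rpow_mul hx, mul_div_cancel₀ _ hs.ne']

theorem summable_rpow_mul_of_tendsto_rpow_mul_log {w : ℕ → ℝ} {s L : ℝ} (hw : ∀ n, 0 < w n)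
    (hs : 0 < s) (hL : L < 0)
    (h : Tendsto (fun n : ℕ => (n : ℝ) ^ (-s) * Real.log (w n)) atTop (𝓝 L)) (m : ℝ) :
    Summable (fun n : ℕ => (n : ℝ) ^ m * w n) := by
  obtain ⟨a, ha, haL⟩ : ∃ a, 0 < a ∧ L < -a := ⟨-L / 2, by linarith, by linarith⟩
  have hbound : w =O[atTop] fun n : ℕ => Real.exp (-a * (n : ℝ) ^ s) := by
    refine IsBigO.of_bound' ?_
    filter_upwards [h.eventually_le_const haL, eventually_gt_atTop 0] with n hn hn0
    have hn' : (0 : ℝ) < n := by exact_mod_cast hn0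
    have hlog : Real.log (w n) ≤ -a * (n : ℝ) ^ s := by
      have := mul_le_mul_of_nonneg_left hn (Real.rpow_nonneg hn'.le s)
      rwa [← mul_assoc, ← Real.rpow_add hn', add_neg_cancel, Real.rpow_zero, one_mul,
        mul_comm] at this
    rw [Real.norm_of_nonneg (hw n).le, Real.norm_of_nonneg (Real.exp_pos _).le,
      ← Real.exp_log (hw n)]
    exact Real.exp_le_exp.2 hlog
  have hdecay := (isLittleO_exp_neg_mul_rpow_rpow_atTop ha hs (-2 - m)).comp_tendsto
    tendsto_natCast_atTop_atTop
  refine summable_of_isBigO_nat (Real.summable_nat_rpow.2 (by norm_num : (-2 : ℝ) < -1))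
    (((isBigO_refl (fun n : ℕ => (n : ℝ) ^ m) atTop).mul
      (hbound.trans hdecay.isBigO)).congr' (.of_forall fun _ => rfl) ?_)
  filter_upwards [eventually_gt_atTop 0] with n hn
  have hn' : (0 : ℝ) < n := by exact_mod_cast hn
  simp only [Function.comp_apply]
  rw [← Real.rpow_add hn']
  ring_nf

theorem summable_rpow_mul_of_tendsto_rpow_mul_s18 {w : ℕ → ℝ} {b L m : ℝ}
    (h : Tendsto (fun n : ℕ => (n : ℝ) ^ b * w n) atTop (𝓝 L)) (hm : m - b < -1) :
    Summable (fun n : ℕ => (n : ℝ) ^ m * w n) := by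
  refine summable_of_isBigO_nat (Real.summable_nat_rpow.2 hm)
    (((isBigO_refl (fun n : ℕ => (n : ℝ) ^ (m - b)) atTop).mul (h.isBigO_one ℝ)).congr'
      ?_ (.of_forall fun _ => mul_one _))
  filter_upwards [eventually_gt_atTop 0] with n hn
  have hn' : (0 : ℝ) < n := by exact_mod_cast hn
  rw [← mul_assoc, ← Real.rpow_add hn', sub_add_cancel]

theorem rpow_mul_zrpCondW_one {b : ℝ} (hb : 0 < b) (n : ℕ) :
    (n : ℝ) ^ b * zrpCondW b 1 n = b * Real.GammaSeq b n := by
  have hfac : ∀ k : ℕ, (1 + b / ((k : ℝ) + 1) ^ (1 : ℝ))⁻¹ = ((k : ℝ) + 1) / (b + (k + 1)) :=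
    fun k => by rw [Real.rpow_one]; field_simp; ring
  rw [zrpCondW, prod_Icc_one_eq_prod_range, Real.GammaSeq, prod_range_succ',
    ← prod_range_add_one_eq_factorial]
  push_cast
  simp only [hfac, prod_div_distrib]
  field_simp
  ring

theorem tendsto_rpow_mul_zrpCondW_one {b : ℝ} (hb : 0 < b) :
    Tendsto (fun n : ℕ => (n : ℝ) ^ b * zrpCondW b 1 n) atTop (𝓝 (Real.Gamma (1 + b))) := by
  rw [add_comm, Real.Gamma_add_one hb.ne']
  simpa only [rpow_mul_zrpCondW_one hb] using (Real.GammaSeq_tendsto_Gamma b).const_mul b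

theorem zrp_condensation_weights_general (b γ : ℝ) (hb : 0 < b) (hγ0 : 0 < γ) :
    (γ = 1 →
      Tendsto (fun n : ℕ => (n : ℝ) ^ b * zrpCondW b 1 n) atTop
        (𝓝 (Real.Gamma (1 + b))) ∧
      (2 < b → Summable (zrpCondW b 1) ∧
        Summable (fun n : ℕ => (n : ℝ) * zrpCondW b 1 n))) ∧
    (γ < 1 →
      Tendsto (fun n : ℕ => (n : ℝ) ^ (γ - 1) * Real.log (zrpCondW b γ n)) atTop
        (𝓝 (-b / (1 - γ))) ∧
      Summable (zrpCondW b γ) ∧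
      Summable (fun n : ℕ => (n : ℝ) * zrpCondW b γ n)) := by
  refine ⟨fun _ => ⟨tendsto_rpow_mul_zrpCondW_one hb, fun hb2 => ?_⟩, fun hγ1 => ?_⟩
  · have hlim := tendsto_rpow_mul_zrpCondW_one hb
    exact ⟨by simpa using summable_rpow_mul_of_tendsto_rpow_mul_s18 (m := 0) hlim (by linarith),
      by simpa using summable_rpow_mul_of_tendsto_rpow_mul_s18 (m := 1) hlim (by linarith)⟩
  · have hlim := tendsto_rpow_mul_log_zrpCondW hb hγ0 hγ1
    have hsum := summable_rpow_mul_of_tendsto_rpow_mul_log (L := -b / (1 - γ))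
      (zrpCondW_pos hb.le γ) (sub_pos.2 hγ1)
      (by rw [neg_div, neg_lt_zero]; exact div_pos hb (sub_pos.2 hγ1))
      (by simpa only [neg_sub] using hlim)
    exact ⟨hlim, by simpa using hsum 0, by simpa using hsum 1⟩

/-- (i) For `γ = 1` the stationary weights have power-law decay
`n^b·w(n) → Γ(1+b)`, and for `b > 2` both `z(1) = ∑ w(n)` and `∑ n·w(n)` converge, so
the critical density `ρ_c = (∑ n·w(n))/z(1)` is finite (condensation). (ii) For
`γ ∈ (0,1)` the weights have stretched-exponential decay,
`n^{γ−1}·log w(n) → −b/(1−γ)`, and `∑ w(n) < ∞`, `∑ n·w(n) < ∞` for every `b > 0`,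
so `ρ_c < ∞`. -/
theorem zrp_condensation_weights (b γ : ℝ) (hb : 0 < b) (hγ0 : 0 < γ) (hγ1 : γ ≤ 1) :
    (γ = 1 →
      Tendsto (fun n : ℕ => (n : ℝ) ^ b * zrpCondW b 1 n) atTop
        (𝓝 (Real.Gamma (1 + b))) ∧
      (2 < b → Summable (zrpCondW b 1) ∧
        Summable (fun n : ℕ => (n : ℝ) * zrpCondW b 1 n))) ∧
    (γ < 1 →
      Tendsto (fun n : ℕ => (n : ℝ) ^ (γ - 1) * Real.log (zrpCondW b γ n)) atTop
        (𝓝 (-b / (1 - γ))) ∧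
      Summable (zrpCondW b γ) ∧
      Summable (fun n : ℕ => (n : ℝ) * zrpCondW b γ n)) :=
  zrp_condensation_weights_general b γ hb hγ0
end

section
/- (i) For every φ ∈ (0, 1/λ_1), the limiting density R(φ) := lim_{L→∞} (1/L)·∑_{x=1}^L λ_x φ/(1 − λ_x φ) exists and equals φ/(1−φ). (ii) Consequently the critical density ρ_c = lim_{φ↗1/λ_1} R(φ) = 1/(λ_1 − 1) is finite, i.e. the system with a decreasing-to-one speed profile exhibits condensation with φ_c = 1/λ_1. -/
/-!
Since `λ_x → 1`, the single-site densities `λ_x φ / (1 - λ_x φ)` converge to `φ / (1 - φ)`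
by continuity of `t ↦ t / (1 - t)` away from `1`, so their Cesàro means converge to the same
limit. As `1/λ_1 < 1`, the same continuity gives the critical density `1/(λ_1 - 1)`.
-/

open Filter Topology

lemma continuousAt_div_one_sub {p : ℝ} (hp : p ≠ 1) :
    ContinuousAt (fun t : ℝ => t / (1 - t)) p :=
  continuousAt_id.div (continuousAt_const.sub continuousAt_id) (sub_ne_zero.2 hp.symm)

lemma inv_div_one_sub_inv {a : ℝ} (ha : a ≠ 0) : a⁻¹ / (1 - a⁻¹) = 1 / (a - 1) := by
  field_simp

lemma Filter.Tendsto.cesaro_div {u : ℕ → ℝ} {l : ℝ} (h : Tendsto u atTop (𝓝 l)) :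
    Tendsto (fun L : ℕ => (∑ x ∈ Finset.range L, u x) / L) atTop (𝓝 l) := by
  simpa only [div_eq_inv_mul] using h.cesaro

lemma tendsto_cesaro_mul_div_one_sub_mul {lam : ℕ → ℝ} (hlam : Tendsto lam atTop (𝓝 1)) {φ : ℝ}
    (hφ : φ ≠ 1) :
    Tendsto (fun L : ℕ => (∑ x ∈ Finset.range L, lam x * φ / (1 - lam x * φ)) / L) atTop
      (𝓝 (φ / (1 - φ))) := by
  have hlamφ : Tendsto (fun x => lam x * φ) atTop (𝓝 φ) := by
    simpa only [one_mul] using hlam.mul_const φ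
  exact ((continuousAt_div_one_sub hφ).tendsto.comp hlamφ).cesaro_div

theorem decreasing_profile_condensation_general
    (lam : ℕ → ℝ)
    (hlamtend : Tendsto lam atTop (𝓝 1))
    (hlam1 : 1 < lam 0) :
    (∀ φ : ℝ, 0 < φ → φ < (lam 0)⁻¹ →
      Tendsto (fun L : ℕ =>
          (∑ x ∈ Finset.range L, lam x * φ / (1 - lam x * φ)) / L)
        atTop (𝓝 (φ / (1 - φ)))) ∧
    Tendsto (fun φ : ℝ => φ / (1 - φ)) (𝓝[<] (lam 0)⁻¹)
      (𝓝 (1 / (lam 0 - 1))) := by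
  have hinv : (lam 0)⁻¹ < 1 := inv_lt_one_of_one_lt₀ hlam1
  refine ⟨fun φ _ hφ => tendsto_cesaro_mul_div_one_sub_mul hlamtend (hφ.trans hinv).ne, ?_⟩
  rw [← inv_div_one_sub_inv (zero_lt_one.trans hlam1).ne']
  exact (continuousAt_div_one_sub hinv.ne).tendsto.mono_left nhdsWithin_le_nhds

/-- Condensation for a deterministic speed profile `λ_x → 1` with maximal value
`λ_1 > 1` attained at the first site, for the inhomogeneous zero-range process with
geometric marginals of mean `R_x(φ) = λ_x φ/(1 − λ_x φ)`:
(i) for every `φ ∈ (0, 1/λ_1)` the limiting density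
`R(φ) = lim_L (1/L)∑_{x=1}^L λ_x φ/(1 − λ_x φ)` exists and equals `φ/(1−φ)`;
(ii) consequently the critical density
`ρ_c = lim_{φ↗1/λ_1} R(φ) = 1/(λ_1 − 1)` is finite: the system exhibits condensation
with `φ_c = 1/λ_1`. -/
theorem decreasing_profile_condensation
    (lam : ℕ → ℝ) (hlampos : ∀ x, 0 < lam x)
    (hlamtend : Tendsto lam atTop (𝓝 1))
    (hlammax : ∀ x, lam x ≤ lam 0) (hlam1 : 1 < lam 0) :
    (∀ φ : ℝ, 0 < φ → φ < (lam 0)⁻¹ →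
      Tendsto (fun L : ℕ =>
          (∑ x ∈ Finset.range L, lam x * φ / (1 - lam x * φ)) / L)
        atTop (𝓝 (φ / (1 - φ)))) ∧
    Tendsto (fun φ : ℝ => φ / (1 - φ)) (𝓝[<] (lam 0)⁻¹)
      (𝓝 (1 / (lam 0 - 1))) :=
  decreasing_profile_condensation_general lam hlamtend hlam1
end
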